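/- arXiv:1002.0783 — 3 statements merged into one kernel-verified Lean document; each statement's English description precedes it below -/
import Mathlib

section
/- Let G be a finite loopless multigraph and H a maximum Δ(G)-edge-colorable subgraph of G. Then for every vertex x of G, the degree of x in H satisfies d_H(x) ≥ ⌈d_G(x)/2⌉. -/
/-- A finite undirected multigraph without loops: `inc e` is the (unordered)
pair of endpoints of the edge `e`. -/
structure Multigraph (V : Type) (E : Type) where
  inc : E → Sym2 V
  loopless : ∀ e : E, ¬ (inc e).IsDiag

namespace Multigraph

variable {V E : Type}

/-- The degree of the vertex `v` in the subgraph with edge set `S`. -/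
noncomputable def degOn (G : Multigraph V E) (S : Set E) (v : V) : ℕ :=
  {e | e ∈ S ∧ v ∈ G.inc e}.ncard

/-- The degree of the vertex `v` in `G`. -/
noncomputable def deg (G : Multigraph V E) (v : V) : ℕ :=
  G.degOn Set.univ v

/-- The maximum degree `Δ(G)` of `G`. -/
noncomputable def maxDeg (G : Multigraph V E) [Fintype V] : ℕ :=
  Finset.univ.sup G.deg

/-- The maximum degree of the subgraph of `G` with edge set `S`. -/
noncomputable def maxDegOn (G : Multigraph V E) [Fintype V] (S : Set E) : ℕ :=
  Finset.univ.sup (G.degOn S)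

/-- The minimum degree of the subgraph of `G` with edge set `S`. -/
noncomputable def minDegOn (G : Multigraph V E) [Fintype V] [Nonempty V] (S : Set E) : ℕ :=
  Finset.univ.inf' Finset.univ_nonempty (G.degOn S)

/-- `c` is a proper edge coloring of the subgraph of `G` with edge set `S`,
using the `n` colors `0, …, n-1`: distinct edges of `S` sharing a vertex get
distinct colors. -/
def ProperOn (G : Multigraph V E) (S : Set E) (c : E → ℕ) (n : ℕ) : Prop :=
  (∀ e ∈ S, c e < n) ∧
    ∀ e ∈ S, ∀ f ∈ S, e ≠ f → (∃ v : V, v ∈ G.inc e ∧ v ∈ G.inc f) → c e ≠ c f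

/-- The subgraph with edge set `S` is properly `n`-edge-colorable. -/
def ColorableOn (G : Multigraph V E) (S : Set E) (n : ℕ) : Prop :=
  ∃ c : E → ℕ, G.ProperOn S c n

/-- The chromatic index of the subgraph of `G` with edge set `S`. -/
noncomputable def chromIndexOn (G : Multigraph V E) (S : Set E) : ℕ :=
  sInf {n | G.ColorableOn S n}

/-- The chromatic index `χ'(G)`. -/
noncomputable def chromIndex (G : Multigraph V E) : ℕ :=
  G.chromIndexOn Set.univ

/-- `S` is (the edge set of) a maximum `Δ(G)`-edge-colorable subgraph of `G`:
it is `Δ(G)`-edge-colorable and has as many edges as possible. -/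
def IsMaxColorable (G : Multigraph V E) [Fintype V] (S : Set E) : Prop :=
  G.ColorableOn S G.maxDeg ∧
    ∀ T : Set E, G.ColorableOn T G.maxDeg → T.ncard ≤ S.ncard

/-- The color `α` is missing at the vertex `v` (w.r.t. the coloring `c` of the
subgraph with edge set `S`): no colored edge incident with `v` has color `α`. -/
def MissingAt (G : Multigraph V E) (S : Set E) (c : E → ℕ) (α : ℕ) (v : V) : Prop :=
  ∀ e ∈ S, v ∈ G.inc e → c e ≠ α

/-- The maximum multiplicity `μ(G)` of an edge of `G`. -/
noncomputable def maxMult (G : Multigraph V E) [Fintype V] : ℕ :=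
  Finset.univ.sup fun p : V × V => {e | G.inc e = s(p.1, p.2)}.ncard

/-- The underlying simple graph of `G`. -/
def toSimple (G : Multigraph V E) : SimpleGraph V where
  Adj u v := u ≠ v ∧ ∃ e : E, G.inc e = s(u, v)
  symm := by
    constructor
    intro u v h
    exact ⟨Ne.symm h.1, by obtain ⟨e, he⟩ := h.2; exact ⟨e, by rw [he, Sym2.eq_swap]⟩⟩
  loopless := by constructor; intro v h; exact h.1 rfl

/-- Walks in a multigraph. -/
inductive Walk (G : Multigraph V E) : V → V → Type
  | nil (v : V) : Walk G v v
  | cons {u v w : V} (e : E) (h : G.inc e = s(u, v)) (p : Walk G v w) : Walk G u w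

namespace Walk

/-- The list of edges of a walk. -/
def edges {G : Multigraph V E} : {u v : V} → G.Walk u v → List E
  | _, _, .nil _ => []
  | _, _, .cons e _ p => e :: edges p

/-- The list of vertices visited by a walk. -/
def support {G : Multigraph V E} : {u v : V} → G.Walk u v → List V
  | _, v, .nil _ => [v]
  | u, _, .cons _ _ p => u :: support p

/-- A walk is a path if it visits no vertex twice. -/
def IsPath {G : Multigraph V E} {u v : V} (p : G.Walk u v) : Prop :=
  p.support.Nodup

/-- A closed walk is a cycle if it is nonempty, repeats no edge, and visits no
vertex twice (except for the common start/end). -/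
def IsCycle {G : Multigraph V E} {v : V} (p : G.Walk v v) : Prop :=
  p.edges ≠ [] ∧ p.edges.Nodup ∧ p.support.tail.Nodup

end Walk

/-- The list of edges `l` is alternately colored `α, β, α, β, …` by `c`. -/
def AltColors (c : E → ℕ) (α β : ℕ) (l : List E) : Prop :=
  ∀ i : Fin l.length, c (l.get i) = if (i : ℕ) % 2 = 0 then α else β

/-- The `α`-`β`-alternating walk `p` (w.r.t. the coloring `c` of the subgraph
with edge set `S`) is maximal: it cannot be extended at its endpoint. -/
def MaximalAlt (G : Multigraph V E) (S : Set E) (c : E → ℕ) (α β : ℕ)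
    {v w : V} (p : G.Walk v w) : Prop :=
  ∀ f ∈ S, f ∉ p.edges → w ∈ G.inc f →
    c f ≠ (if p.edges.length % 2 = 0 then α else β)

/-- `C` is the edge set of the odd cycle `C^e_{α,β}`: the uncolored edge
`e = (u,v)` (with `α` missing at `u` and `β` missing at `v`) together with the
`α`-`β`-alternating path joining `v` to `u` inside the colored subgraph `S`. -/
def IsKempeCycle (G : Multigraph V E) [Fintype V] (S : Set E) (c : E → ℕ)
    (e : E) (α β : ℕ) (C : Set E) : Prop :=
  α < G.maxDeg ∧ β < G.maxDeg ∧
    ∃ (u v : V) (p : G.Walk v u),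
      G.inc e = s(u, v) ∧ G.MissingAt S c α u ∧ G.MissingAt S c β v ∧
      p.IsPath ∧ (∀ f ∈ p.edges, f ∈ S) ∧ AltColors c α β p.edges ∧
      C = insert e {f | f ∈ p.edges}

end Multigraph

namespace Multigraph

-- auxiliary lemmas

lemma same_color_eq {G : Multigraph V E} {S : Set E} {c : E → ℕ} {n : ℕ}
    (hc : G.ProperOn S c n) {a b : E} (ha : a ∈ S) (hb : b ∈ S) {v : V}
    (hva : v ∈ G.inc a) (hvb : v ∈ G.inc b) (hcc : c a = c b) : a = b := by
  by_contra hne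
  exact hc.2 a ha b hb hne ⟨v, hva, hvb⟩ hcc

lemma degOn_eq_ncard_image {G : Multigraph V E} {S : Set E} {c : E → ℕ} {n : ℕ}
    (hc : G.ProperOn S c n) (v : V) :
    G.degOn S v = (c '' {e | e ∈ S ∧ v ∈ G.inc e}).ncard := by
  rw [degOn, Set.ncard_image_of_injOn]
  intro a ha b hb hcc
  exact same_color_eq hc ha.1 hb.1 ha.2 hb.2 hcc

lemma missingAt_iff_not_mem {G : Multigraph V E} {S : Set E} {c : E → ℕ} {γ : ℕ} {v : V} :
    G.MissingAt S c γ v ↔ γ ∉ c '' {e | e ∈ S ∧ v ∈ G.inc e} := by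
  constructor
  · rintro h ⟨e, ⟨heS, hev⟩, rfl⟩
    exact h e heS hev rfl
  · intro h e heS hev hce
    exact h ⟨e, ⟨heS, hev⟩, hce⟩

lemma ncard_missing {G : Multigraph V E} [Fintype E] {S : Set E} {c : E → ℕ} {n : ℕ}
    (hc : G.ProperOn S c n) (v : V) :
    {γ | γ < n ∧ G.MissingAt S c γ v}.ncard = n - G.degOn S v := by
  have hsub : c '' {e | e ∈ S ∧ v ∈ G.inc e} ⊆ ↑(Finset.range n) := by
    rintro γ ⟨e, ⟨heS, _⟩, rfl⟩
    simp [hc.1 e heS]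
  have heq : {γ | γ < n ∧ G.MissingAt S c γ v}
      = ↑(Finset.range n) \ c '' {e | e ∈ S ∧ v ∈ G.inc e} := by
    ext γ
    simp only [Set.mem_setOf_eq, Set.mem_diff, Finset.coe_range, Set.mem_Iio]
    rw [missingAt_iff_not_mem]
  rw [heq, Set.ncard_diff hsub ((Set.toFinite _).image c), degOn_eq_ncard_image hc,
    Set.ncard_coe_finset, Finset.card_range]

lemma exists_missing {G : Multigraph V E} [Fintype E] {S : Set E} {c : E → ℕ} {n : ℕ}
    (hc : G.ProperOn S c n) (v : V) (h : G.degOn S v < n) :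
    ∃ γ, γ < n ∧ G.MissingAt S c γ v := by
  have h1 : {γ | γ < n ∧ G.MissingAt S c γ v}.ncard = n - G.degOn S v :=
    ncard_missing hc v
  have h2 : {γ | γ < n ∧ G.MissingAt S c γ v}.Nonempty := by
    apply Set.nonempty_of_ncard_ne_zero
    omega
  exact h2

lemma deg_le_maxDeg (G : Multigraph V E) [Fintype V] (v : V) : G.deg v ≤ G.maxDeg :=
  Finset.le_sup (Finset.mem_univ v)

lemma deg_split (G : Multigraph V E) (S : Set E) [Fintype E] (x : V) :
    G.deg x = G.degOn S x + {e | e ∉ S ∧ x ∈ G.inc e}.ncard := by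
  rw [deg, degOn, degOn, ← Set.ncard_union_eq ?_ (Set.toFinite _) (Set.toFinite _)]
  · congr 1
    ext e
    simp only [Set.mem_union, Set.mem_setOf_eq, Set.mem_univ, true_and]
    tauto
  · rw [Set.disjoint_left]
    rintro e ⟨heS, _⟩ ⟨heNS, _⟩
    exact heNS heS

/-- If an uncolored edge has a common missing color at its two endpoints,
the colorable subgraph is not maximum. -/
lemma extend_contra {G : Multigraph V E} [Fintype V] [Fintype E] {S : Set E}
    (hS : G.IsMaxColorable S) {c : E → ℕ} (hc : G.ProperOn S c G.maxDeg)
    {e : E} (he : e ∉ S) {x y : V} (hxy : G.inc e = s(x, y)) {γ : ℕ}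
    (hγ : γ < G.maxDeg) (hmx : G.MissingAt S c γ x) (hmy : G.MissingAt S c γ y) :
    False := by
  classical
  set c' := Function.update c e γ with hc'
  have hproper : G.ProperOn (insert e S) c' G.maxDeg := by
    constructor
    · intro a ha
      rcases Set.mem_insert_iff.1 ha with h1 | haS
      · rw [hc', h1, Function.update_self]; exact hγ
      · have hae : a ≠ e := fun h => he (h ▸ haS)
        rw [hc', Function.update_of_ne hae]
        exact hc.1 a haS
    · intro a ha b hb hab hshare
      have key : ∀ b' ∈ S, (∃ v, v ∈ G.inc e ∧ v ∈ G.inc b') → c b' ≠ γ := by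
        rintro b' hb'S ⟨v, hve, hvb'⟩
        rw [hxy] at hve
        rcases Sym2.mem_iff.1 hve with rfl | rfl
        · exact hmx b' hb'S hvb'
        · exact hmy b' hb'S hvb'
      rcases Set.mem_insert_iff.1 ha with h1 | haS
      · rcases Set.mem_insert_iff.1 hb with h2 | hbS
        · exact absurd (h1.trans h2.symm) hab
        · have hbe : b ≠ e := fun h => he (h ▸ hbS)
          rw [hc', h1, Function.update_self, Function.update_of_ne hbe]
          have := key b hbS (h1 ▸ hshare)
          exact fun h => this h.symm
      · have hae : a ≠ e := fun h => he (h ▸ haS)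
        rcases Set.mem_insert_iff.1 hb with h2 | hbS
        · rw [hc', h2, Function.update_self, Function.update_of_ne hae]
          obtain ⟨v, hva, hvb⟩ := hshare
          exact key a haS ⟨v, h2 ▸ hvb, hva⟩
        · have hbe : b ≠ e := fun h => he (h ▸ hbS)
          rw [hc', Function.update_of_ne hae, Function.update_of_ne hbe]
          exact hc.2 a haS b hbS hab hshare
  have hle := hS.2 (insert e S) ⟨c', hproper⟩
  rw [Set.ncard_insert_of_notMem he (Set.toFinite _)] at hle
  omega


def InD (G : Multigraph V E) (S : Set E) (c : E → ℕ) (α β : ℕ) (a : E) : Prop :=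
  a ∈ S ∧ (c a = α ∨ c a = β)

def Kadj (G : Multigraph V E) (S : Set E) (c : E → ℕ) (α β : ℕ) (a b : E) : Prop :=
  G.InD S c α β a ∧ G.InD S c α β b ∧ a ≠ b ∧ ∃ v, v ∈ G.inc a ∧ v ∈ G.inc b

open Relation in
/-- Kempe chain lemma: if `e ∉ S` joins `x` and `y`, `α` is missing at `x`, `β`
is missing at `y`, and `f` is the `β`-colored edge at `x`, then the
`α`-`β`-component of `f` contains an `α`-colored edge at `y`. -/
lemma kempe {G : Multigraph V E} [Fintype V] [Fintype E] {S : Set E}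
    (hS : G.IsMaxColorable S) {c : E → ℕ} (hc : G.ProperOn S c G.maxDeg)
    {e : E} {x y : V} {α β : ℕ} {f : E}
    (he : e ∉ S) (hxy : G.inc e = s(x, y))
    (hα : α < G.maxDeg) (hmx : G.MissingAt S c α x)
    (hβ : β < G.maxDeg) (hmy : G.MissingAt S c β y) (hαβ : α ≠ β)
    (hfS : f ∈ S) (hxf : x ∈ G.inc f) (hcf : c f = β) :
    ∃ g, ReflTransGen (G.Kadj S c α β) f g ∧ y ∈ G.inc g ∧ c g = α := by
  classical
  by_contra hno
  push_neg at hno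
  set σ : ℕ → ℕ := fun γ => if γ = α then β else if γ = β then α else γ with hσ
  set K : Set E := {a | ReflTransGen (G.Kadj S c α β) f a} with hK
  have hfD : G.InD S c α β f := ⟨hfS, Or.inr hcf⟩
  have hKD : ∀ a ∈ K, G.InD S c α β a := by
    intro a ha
    induction ha with
    | refl => exact hfD
    | tail hb step ih => exact step.2.1
  have hclose : ∀ a ∈ K, ∀ b, G.InD S c α β b →
      (∃ v, v ∈ G.inc a ∧ v ∈ G.inc b) → b ∈ K := by
    intro a ha b hbD hsh
    by_cases hab : a = b
    · exact hab ▸ ha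
    · exact ReflTransGen.tail ha ⟨hKD a ha, hbD, hab, hsh⟩
  set c' : E → ℕ := fun a => if a ∈ K then σ (c a) else c a with hc'
  have hσα : σ α = β := by simp [hσ]
  have hσβ : σ β = α := by simp [hσ, hαβ.symm]
  have hproper : G.ProperOn S c' G.maxDeg := by
    constructor
    · intro a ha
      by_cases hK1 : a ∈ K
      · have := hc.1 a ha
        simp only [hc', if_pos hK1, hσ]
        split_ifs <;> omega
      · simp only [hc', if_neg hK1]
        exact hc.1 a ha
    · intro a ha b hb hab hsh
      have hcab := hc.2 a ha b hb hab hsh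
      by_cases hKa : a ∈ K <;> by_cases hKb : b ∈ K
      · simp only [hc', if_pos hKa, if_pos hKb, hσ]
        split_ifs <;> omega
      · simp only [hc', if_pos hKa, if_neg hKb]
        rcases (hKD a hKa).2 with h1 | h1 <;> rw [h1]
        · rw [hσα]
          intro hcb
          exact hKb (hclose a hKa b ⟨hb, Or.inr hcb.symm⟩
            (let ⟨v, h⟩ := hsh; ⟨v, h⟩))
        · rw [hσβ]
          intro hcb
          exact hKb (hclose a hKa b ⟨hb, Or.inl hcb.symm⟩
            (let ⟨v, h⟩ := hsh; ⟨v, h⟩))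
      · simp only [hc', if_neg hKa, if_pos hKb]
        rcases (hKD b hKb).2 with h1 | h1 <;> rw [h1]
        · rw [hσα]
          intro hca
          refine hKa (hclose b hKb a ⟨ha, Or.inr hca⟩ ?_)
          obtain ⟨v, h1, h2⟩ := hsh
          exact ⟨v, h2, h1⟩
        · rw [hσβ]
          intro hca
          refine hKa (hclose b hKb a ⟨ha, Or.inl hca⟩ ?_)
          obtain ⟨v, h1, h2⟩ := hsh
          exact ⟨v, h2, h1⟩
      · simp only [hc', if_neg hKa, if_neg hKb]
        exact hcab
  have hmx' : G.MissingAt S c' β x := by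
    intro a haS hxa
    by_cases hKa : a ∈ K
    · rcases (hKD a hKa).2 with h1 | h1
      · exact absurd h1 (hmx a haS hxa)
      · simp only [hc', if_pos hKa, h1, hσβ]
        exact fun h => hαβ h
    · simp only [hc', if_neg hKa]
      intro hca
      exact hKa (hclose f ReflTransGen.refl a ⟨haS, Or.inr hca⟩ ⟨x, hxf, hxa⟩)
  have hmy' : G.MissingAt S c' β y := by
    intro a haS hya
    by_cases hKa : a ∈ K
    · rcases (hKD a hKa).2 with h1 | h1
      · exact absurd h1 (hno a hKa hya)
      · simp only [hc', if_pos hKa, h1, hσβ]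
        exact fun h => hαβ h
    · simp only [hc', if_neg hKa]
      exact hmy a haS hya
  exact extend_contra hS hproper he hxy hβ hmx' hmy'


lemma kadj_symm {G : Multigraph V E} {S : Set E} {c : E → ℕ} {α β : ℕ} {a b : E}
    (h : G.Kadj S c α β a b) : G.Kadj S c α β b a := by
  obtain ⟨h1, h2, h3, v, h4, h5⟩ := h
  exact ⟨h2, h1, h3.symm, v, h5, h4⟩

lemma kadj_ne {G : Multigraph V E} {S : Set E} {c : E → ℕ} {α β : ℕ} {a b : E}
    (h : G.Kadj S c α β a b) : a ≠ b := h.2.2.1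

lemma kadj_unique_at {G : Multigraph V E} {S : Set E} {c : E → ℕ} {n α β : ℕ}
    (hc : G.ProperOn S c n) {a b b' : E} {v : V}
    (hab : G.Kadj S c α β a b) (hab' : G.Kadj S c α β a b')
    (hva : v ∈ G.inc a) (hvb : v ∈ G.inc b) (hvb' : v ∈ G.inc b') : b = b' := by
  have hcb : c b ≠ c a := fun h =>
    hab.2.2.1 (same_color_eq hc hab.1.1 hab.2.1.1 hva hvb h.symm)
  have hcb' : c b' ≠ c a := fun h =>
    hab'.2.2.1 (same_color_eq hc hab'.1.1 hab'.2.1.1 hva hvb' h.symm)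
  have h1 := hab.1.2
  have h2 := hab.2.1.2
  have h3 := hab'.2.1.2
  have hbb' : c b = c b' := by
    rcases h1 with h1 | h1 <;> rcases h2 with h2 | h2 <;> rcases h3 with h3 | h3 <;> omega
  exact same_color_eq hc hab.2.1.1 hab'.2.1.1 hvb hvb' hbb'

lemma kadj_leaf {G : Multigraph V E} {S : Set E} {c : E → ℕ} {n α β : ℕ}
    (hc : G.ProperOn S c n) {a : E} {v : V} (hva : v ∈ G.inc a)
    (hdead : ∀ b, G.InD S c α β b → v ∈ G.inc b → b = a) :
    ∀ b₁ b₂, G.Kadj S c α β a b₁ → G.Kadj S c α β a b₂ → b₁ = b₂ := by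
  obtain ⟨w, hw⟩ := Sym2.mem_iff_exists.1 hva
  have hwa : w ∈ G.inc a := hw ▸ Sym2.mem_mk_right v w
  intro b₁ b₂ h1 h2
  have key : ∀ b, G.Kadj S c α β a b → w ∈ G.inc b := by
    intro b hb
    obtain ⟨haD, hbD, hab, u, hua, hub⟩ := hb
    rw [hw] at hua
    rcases Sym2.mem_iff.1 hua with rfl | rfl
    · exact absurd (hdead b hbD hub) (Ne.symm hab)
    · exact hub
  exact kadj_unique_at hc h1 h2 hwa (key b₁ h1) (key b₂ h2)

lemma kadj_deg2 {G : Multigraph V E} {S : Set E} {c : E → ℕ} {n α β : ℕ}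
    (hc : G.ProperOn S c n) :
    ∀ a b₁ b₂ b₃, G.Kadj S c α β a b₁ → G.Kadj S c α β a b₂ →
      G.Kadj S c α β a b₃ → b₁ = b₂ ∨ b₁ = b₃ ∨ b₂ = b₃ := by
  intro a b₁ b₂ b₃ h1 h2 h3
  obtain ⟨v, w, hvw⟩ : ∃ v w, G.inc a = s(v, w) :=
    Sym2.ind (fun v w => ⟨v, w, rfl⟩) (G.inc a)
  have hva : v ∈ G.inc a := hvw ▸ Sym2.mem_mk_left v w
  have hwa : w ∈ G.inc a := hvw ▸ Sym2.mem_mk_right v w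
  have key : ∀ b, G.Kadj S c α β a b → v ∈ G.inc b ∨ w ∈ G.inc b := by
    intro b hb
    obtain ⟨haD, hbD, hab, u, hua, hub⟩ := hb
    rw [hvw] at hua
    rcases Sym2.mem_iff.1 hua with rfl | rfl
    · exact Or.inl hub
    · exact Or.inr hub
  rcases key b₁ h1 with k1 | k1 <;> rcases key b₂ h2 with k2 | k2 <;>
    rcases key b₃ h3 with k3 | k3
  · exact Or.inl (kadj_unique_at hc h1 h2 hva k1 k2)
  · exact Or.inl (kadj_unique_at hc h1 h2 hva k1 k2)
  · exact Or.inr (Or.inl (kadj_unique_at hc h1 h3 hva k1 k3))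
  · exact Or.inr (Or.inr (kadj_unique_at hc h2 h3 hwa k2 k3))
  · exact Or.inr (Or.inr (kadj_unique_at hc h2 h3 hva k2 k3))
  · exact Or.inr (Or.inl (kadj_unique_at hc h1 h3 hwa k1 k3))
  · exact Or.inl (kadj_unique_at hc h1 h2 hwa k1 k2)
  · exact Or.inl (kadj_unique_at hc h1 h2 hwa k1 k2)

end Multigraph

lemma aux_exists_injOn {A B : Type} {s : Set A} {t : Set B}
    (hs : s.Finite) (ht : t.Finite) (h : s.ncard ≤ t.ncard) (b₀ : B) :
    ∃ φ : A → B, Set.MapsTo φ s t ∧ Set.InjOn φ s := by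
  classical
  haveI := hs.fintype
  haveI := ht.fintype
  have hcard : Fintype.card s ≤ Fintype.card t := by
    rwa [← Nat.card_eq_fintype_card, ← Nat.card_eq_fintype_card,
      Nat.card_coe_set_eq, Nat.card_coe_set_eq]
  obtain ⟨emb⟩ := Function.Embedding.nonempty_of_card_le hcard
  refine ⟨fun a => if h : a ∈ s then (emb ⟨a, h⟩ : B) else b₀, ?_, ?_⟩
  · intro a ha
    simp only [dif_pos ha]
    exact (emb ⟨a, ha⟩).2
  · intro a ha b hb hab
    simp only [dif_pos ha, dif_pos hb] at hab
    have := emb.injective (Subtype.ext hab)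
    exact congrArg Subtype.val this


open Relation in
/-- In a graph with max degree ≤ 2, a component cannot contain three distinct
vertices of degree ≤ 1 (abstract version on an arbitrary type). -/
theorem aux_three_leaf {X : Type} [Fintype X] :
    ∀ (n : ℕ) (adj : X → X → Prop), {a | ∃ b, adj a b}.ncard ≤ n →
    (∀ a b, adj a b → adj b a) →
    (∀ a b, adj a b → a ≠ b) →
    (∀ a b₁ b₂ b₃, adj a b₁ → adj a b₂ → adj a b₃ → b₁ = b₂ ∨ b₁ = b₃ ∨ b₂ = b₃) →
    ∀ f g g' : X,
    (∀ b₁ b₂, adj f b₁ → adj f b₂ → b₁ = b₂) →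
    (∀ b₁ b₂, adj g b₁ → adj g b₂ → b₁ = b₂) →
    (∀ b₁ b₂, adj g' b₁ → adj g' b₂ → b₁ = b₂) →
    f ≠ g → f ≠ g' → g ≠ g' →
    ReflTransGen adj f g → ReflTransGen adj f g' → False := by
  intro n
  induction n with
  | zero =>
    intro adj hsupp _ _ _ f g g' _ _ _ hfg _ _ hreach _
    -- f has a neighbor since it reaches g ≠ f
    rcases hreach.cases_head with rfl | ⟨m, hm, _⟩
    · exact hfg rfl
    · have : f ∈ {a | ∃ b, adj a b} := ⟨m, hm⟩
      have h1 : 0 < ({a | ∃ b, adj a b} : Set X).ncard :=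
        (Set.ncard_pos (Set.toFinite _)).2 ⟨f, this⟩
      omega
  | succ n ih =>
    intro adj hsupp hsym hne hdeg2 f g g' hlf hlg hlg' hfg hfg' hgg' hreachg hreachg'
    -- f has a unique neighbor m
    obtain ⟨m, hfm⟩ : ∃ m, adj f m := by
      rcases hreachg.cases_head with rfl | ⟨m, hm, _⟩
      · exact absurd rfl hfg
      · exact ⟨m, hm⟩
    have hmf : m ≠ f := fun h => hne f m hfm h.symm
    -- bypass lemma: anything reachable from f is f or reachable from m avoiding f
    have bypass : ∀ z, ReflTransGen adj f z →
        z = f ∨ ReflTransGen (fun a b => adj a b ∧ b ≠ f) m z := by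
      intro z hz
      induction hz with
      | refl => exact Or.inl rfl
      | tail hb step ih2 =>
        rename_i b z'
        rcases ih2 with rfl | hmb
        · have : z' = m := hlf _ _ step hfm
          subst this
          exact Or.inr ReflTransGen.refl
        · by_cases hzf : z' = f
          · exact Or.inl hzf
          · exact Or.inr (hmb.tail ⟨step, hzf⟩)
    by_cases hmg : m = g
    · -- component is {f, g}
      subst hmg
      have claim : ∀ z, ReflTransGen adj f z → z = f ∨ z = m := by
        intro z hz
        induction hz with
        | refl => exact Or.inl rfl
        | tail hb step ih2 =>
          rename_i b z'
          rcases ih2 with rfl | rfl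
          · exact Or.inr (hlf _ _ step hfm)
          · exact Or.inl (hlg _ _ step (hsym _ _ hfm))
      rcases claim g' hreachg' with rfl | rfl
      · exact hfg' rfl
      · exact hgg' rfl
    by_cases hmg' : m = g'
    · subst hmg'
      have claim : ∀ z, ReflTransGen adj f z → z = f ∨ z = m := by
        intro z hz
        induction hz with
        | refl => exact Or.inl rfl
        | tail hb step ih2 =>
          rename_i b z'
          rcases ih2 with rfl | rfl
          · exact Or.inr (hlf _ _ step hfm)
          · exact Or.inl (hlg' _ _ step (hsym _ _ hfm))
      rcases claim g hreachg with rfl | rfl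
      · exact hfg rfl
      · exact hgg' rfl
    -- recurse on adj with f removed
    set adj' : X → X → Prop := fun a b => adj a b ∧ a ≠ f ∧ b ≠ f with hadj'
    have upgrade : ∀ z, ReflTransGen (fun a b => adj a b ∧ b ≠ f) m z →
        z ≠ f ∧ ReflTransGen adj' m z := by
      intro z hz
      induction hz with
      | refl => exact ⟨hmf, ReflTransGen.refl⟩
      | tail hb step ih2 =>
        exact ⟨step.2, ih2.2.tail ⟨step.1, ih2.1, step.2⟩⟩
    have hreachg2 : ReflTransGen adj' m g := by
      rcases bypass g hreachg with rfl | h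
      · exact absurd rfl hfg
      · exact (upgrade _ h).2
    have hreachg'2 : ReflTransGen adj' m g' := by
      rcases bypass g' hreachg' with rfl | h
      · exact absurd rfl hfg'
      · exact (upgrade _ h).2
    have hsupp' : ({a | ∃ b, adj' a b} : Set X).ncard ≤ n := by
      have hsub : {a | ∃ b, adj' a b} ⊆ {a | ∃ b, adj a b} \ {f} := by
        rintro a ⟨b, hb, haf, hbf⟩
        exact ⟨⟨b, hb⟩, haf⟩
      have hf : f ∈ {a | ∃ b, adj a b} := ⟨m, hfm⟩
      have h1 : ({a | ∃ b, adj a b} \ {f} : Set X).ncard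
          = ({a | ∃ b, adj a b} : Set X).ncard - 1 :=
        Set.ncard_diff_singleton_of_mem hf
      have h2 := Set.ncard_le_ncard hsub (Set.toFinite _)
      have h3 : 0 < ({a | ∃ b, adj a b} : Set X).ncard :=
        (Set.ncard_pos (Set.toFinite _)).2 ⟨f, hf⟩
      omega
    refine ih adj' hsupp' (fun a b h => ⟨hsym a b h.1, h.2.2, h.2.1⟩)
      (fun a b h => hne a b h.1)
      (fun a b₁ b₂ b₃ h1 h2 h3 => hdeg2 a b₁ b₂ b₃ h1.1 h2.1 h3.1)
      m g g' ?_ (fun b₁ b₂ h1 h2 => hlg _ _ h1.1 h2.1)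
      (fun b₁ b₂ h1 h2 => hlg' _ _ h1.1 h2.1)
      hmg hmg' hgg' hreachg2 hreachg'2
    · -- m is now a leaf
      intro b₁ b₂ h1 h2
      rcases hdeg2 m b₁ b₂ f h1.1 h2.1 (hsym _ _ hfm) with h | h | h
      · exact h
      · exact absurd h h1.2.2
      · exact absurd h h2.2.2


open Relation in
lemma Multigraph.kadj_reach_InD {V E : Type} {G : Multigraph V E} {S : Set E}
    {c : E → ℕ} {α β : ℕ} {f g : E} (hf : G.InD S c α β f)
    (h : ReflTransGen (G.Kadj S c α β) f g) : G.InD S c α β g := by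
  induction h with
  | refl => exact hf
  | tail hb step ih => exact step.2.1



/-- Theorem 6.2 of the paper. If `H` (edge set `S`) is a
maximum `Δ(G)`-edge-colorable subgraph of a loopless multigraph `G`, then
every vertex `x` satisfies `d_H(x) ≥ ⌈d_G(x)/2⌉`. -/
theorem maxColorable_degree_bound
    {V E : Type} [Fintype V] [Fintype E] (G : Multigraph V E)
    (S : Set E) (hS : G.IsMaxColorable S) (x : V) :
    (G.deg x + 1) / 2 ≤ G.degOn S x := by
  classical
  obtain ⟨c, hc⟩ := hS.1
  set U : Set E := {e | e ∉ S ∧ x ∈ G.inc e} with hUdef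
  have hsplit : G.deg x = G.degOn S x + U.ncard := G.deg_split S x
  suffices h : U.ncard ≤ G.degOn S x by omega
  rcases U.eq_empty_or_nonempty with hUe | hUne
  · rw [hUe]; simp
  obtain ⟨e₀, he₀⟩ := hUne
  have hlt : G.degOn S x < G.maxDeg := by
    have h1 : G.degOn S x < G.deg x := by
      apply Set.ncard_lt_ncard _ (Set.toFinite _)
      rw [Set.ssubset_def]
      constructor
      · rintro a ⟨h1, h2⟩
        exact ⟨Set.mem_univ a, h2⟩
      · intro hsub
        exact he₀.1 (hsub ⟨Set.mem_univ e₀, he₀.2⟩).1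
    exact lt_of_lt_of_le h1 (G.deg_le_maxDeg x)
  obtain ⟨α, hαΔ, hmα⟩ := Multigraph.exists_missing hc x hlt
  have hYe : ∀ e, e ∈ U → ∃ w, G.inc e = s(x, w) := fun e he => Sym2.mem_iff_exists.1 he.2
  choose Y hY using hYe
  set Yf : E → V := fun e => if h : e ∈ U then Y e h else x with hYfdef
  have hYf : ∀ e, e ∈ U → G.inc e = s(x, Yf e) := by
    intro e he
    simp only [hYfdef, dif_pos he]
    exact hY e he
  have hYmem : ∀ e, e ∈ U → Yf e ∈ G.inc e := fun e he =>
    (hYf e he) ▸ Sym2.mem_mk_right x (Yf e)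
  set M : V → Set ℕ := fun y => {γ | γ < G.maxDeg ∧ G.MissingAt S c γ y} with hMdef
  set Uy : V → Set E := fun y => {e | e ∈ U ∧ Yf e = y} with hUydef
  have hcardUM : ∀ y, (Uy y).ncard ≤ (M y).ncard := by
    intro y
    have h1 : (M y).ncard = G.maxDeg - G.degOn S y := Multigraph.ncard_missing hc y
    have h2 : Uy y ⊆ {e | e ∉ S ∧ y ∈ G.inc e} := by
      rintro e ⟨he, rfl⟩
      exact ⟨he.1, hYmem e he⟩
    have h3 := Set.ncard_le_ncard h2 (Set.toFinite _)
    have h4 := G.deg_split S y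
    have h5 := G.deg_le_maxDeg y
    omega
  have hΨex : ∀ y, ∃ φ : E → ℕ, Set.MapsTo φ (Uy y) (M y) ∧ Set.InjOn φ (Uy y) :=
    fun y => aux_exists_injOn (Set.toFinite _) ((Set.finite_Iio G.maxDeg).subset (fun γ hγ => hγ.1)) (hcardUM y) 0
  choose Ψ hΨmaps hΨinj using hΨex
  have hβmem : ∀ e, e ∈ U → Ψ (Yf e) e ∈ M (Yf e) := by
    intro e he
    exact hΨmaps (Yf e) ⟨he, rfl⟩
  have hβlt : ∀ e, e ∈ U → Ψ (Yf e) e < G.maxDeg := fun e he => (hβmem e he).1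
  have hβmiss : ∀ e, e ∈ U → G.MissingAt S c (Ψ (Yf e) e) (Yf e) :=
    fun e he => (hβmem e he).2
  have hΦe : ∀ e, e ∈ U → ∃ a, a ∈ S ∧ x ∈ G.inc a ∧ c a = Ψ (Yf e) e := by
    intro e he
    by_contra hno
    push_neg at hno
    have hmiss : G.MissingAt S c (Ψ (Yf e) e) x := fun a haS hxa => hno a haS hxa
    exact Multigraph.extend_contra hS hc he.1 (hYf e he) (hβlt e he) hmiss (hβmiss e he)
  choose Φ hΦS hΦx hΦc using hΦe
  have goal2 : U.ncard ≤ {a | a ∈ S ∧ x ∈ G.inc a}.ncard := by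
    apply Set.ncard_le_ncard_of_injOn (fun e => if h : e ∈ U then Φ e h else e)
      ?_ ?_ (Set.toFinite _)
    · intro e he
      simp only [dif_pos he]
      exact ⟨hΦS e he, hΦx e he⟩
    · intro e he e' he' heq
      simp only [dif_pos he, dif_pos he'] at heq
      by_contra hee
      set a₀ := Φ e he with ha₀
      have hca₀ : c a₀ = Ψ (Yf e) e := hΦc e he
      have hca₀' : c a₀ = Ψ (Yf e') e' := by rw [heq]; exact hΦc e' he'
      have hββ : Ψ (Yf e) e = Ψ (Yf e') e' := by rw [← hca₀, hca₀']
      by_cases hyy : Yf e = Yf e'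
      · apply hee
        apply hΨinj (Yf e) ⟨he, rfl⟩ (⟨he', hyy.symm⟩ : e' ∈ Uy (Yf e))
        show Ψ (Yf e) e = Ψ (Yf e) e'
        rw [hββ, hyy]
      · set β := Ψ (Yf e) e with hβdef
        have hαβ : α ≠ β := by
          intro h
          exact hmα a₀ (hΦS e he) (hΦx e he) (by rw [hca₀]; exact h.symm)
        have hβlt2 : β < G.maxDeg := hβlt e he
        have hmissy : G.MissingAt S c β (Yf e) := hβmiss e he
        have hmissy' : G.MissingAt S c β (Yf e') := by
          rw [hββ]
          exact hβmiss e' he'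
        obtain ⟨g, hg1, hg2, hg3⟩ := Multigraph.kempe hS hc he.1 (hYf e he) hαΔ hmα
          hβlt2 hmissy hαβ (hΦS e he) (hΦx e he) hca₀
        obtain ⟨g', hg1', hg2', hg3'⟩ := Multigraph.kempe hS hc he'.1 (hYf e' he') hαΔ hmα
          hβlt2 hmissy' hαβ (hΦS e he) (hΦx e he) hca₀
        have ha₀D : G.InD S c α β a₀ := ⟨hΦS e he, Or.inr hca₀⟩
        have hgD : G.InD S c α β g := Multigraph.kadj_reach_InD ha₀D hg1
        have hgD' : G.InD S c α β g' := Multigraph.kadj_reach_InD ha₀D hg1'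
        have hga₀ : g ≠ a₀ := fun h => hαβ (by rw [← hg3, h, hca₀])
        have hga₀' : g' ≠ a₀ := fun h => hαβ (by rw [← hg3', h, hca₀])
        by_cases hgg : g = g'
        · subst hgg
          have hincg : G.inc g = s(Yf e, Yf e') := (Sym2.mem_and_mem_iff hyy).1 ⟨hg2, hg2'⟩
          have hnon : ∀ b, G.Kadj S c α β g b → False := by
            rintro b ⟨hgD2, hbD, hgb, v, hvg, hvb⟩
            rw [hincg] at hvg
            rcases Sym2.mem_iff.1 hvg with rfl | rfl
            · rcases hbD.2 with h1 | h1
              · exact hgb (Multigraph.same_color_eq hc hgD2.1 hbD.1 hg2 hvb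
                  (hg3.trans h1.symm))
              · exact hmissy b hbD.1 hvb h1
            · rcases hbD.2 with h1 | h1
              · exact hgb (Multigraph.same_color_eq hc hgD2.1 hbD.1 hg2' hvb
                  (hg3.trans h1.symm))
              · exact hmissy' b hbD.1 hvb h1
          rcases hg1.cases_tail with h | ⟨b, hb1, hb2⟩
          · exact hga₀ h
          · exact hnon b (Multigraph.kadj_symm hb2)
        · have hleafa₀ : ∀ b₁ b₂, G.Kadj S c α β a₀ b₁ → G.Kadj S c α β a₀ b₂ → b₁ = b₂ := by
            apply Multigraph.kadj_leaf hc (hΦx e he)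
            intro b hbD hxb
            rcases hbD.2 with h1 | h1
            · exact absurd h1 (hmα b hbD.1 hxb)
            · exact Multigraph.same_color_eq hc hbD.1 (hΦS e he) hxb (hΦx e he)
                (by rw [h1, hca₀])
          have hleafg : ∀ b₁ b₂, G.Kadj S c α β g b₁ → G.Kadj S c α β g b₂ → b₁ = b₂ := by
            apply Multigraph.kadj_leaf hc hg2
            intro b hbD hyb
            rcases hbD.2 with h1 | h1
            · exact Multigraph.same_color_eq hc hbD.1 hgD.1 hyb hg2 (h1.trans hg3.symm)
            · exact absurd h1 (hmissy b hbD.1 hyb)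
          have hleafg' : ∀ b₁ b₂, G.Kadj S c α β g' b₁ → G.Kadj S c α β g' b₂ → b₁ = b₂ := by
            apply Multigraph.kadj_leaf hc hg2'
            intro b hbD hyb
            rcases hbD.2 with h1 | h1
            · exact Multigraph.same_color_eq hc hbD.1 hgD'.1 hyb hg2' (h1.trans hg3'.symm)
            · exact absurd h1 (hmissy' b hbD.1 hyb)
          exact aux_three_leaf _ (G.Kadj S c α β) le_rfl
            (fun a b h => Multigraph.kadj_symm h) (fun a b h => h.2.2.1)
            (Multigraph.kadj_deg2 hc) a₀ g g' hleafa₀ hleafg hleafg'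
            hga₀.symm hga₀'.symm hgg hg1 hg1'
  exact goal2
end

section
/- Let G be a finite loopless multigraph and H a maximum Δ(G)-edge-colorable subgraph of G. Then the minimum degree of H satisfies δ(H) ≥ ⌈δ(G)/2⌉, where δ denotes minimum degree. -/
/-! ### Auxiliary development: Kempe chains -/

section KempeAux

variable {V E : Type}

/-- The color of the `k`-th edge of an `α`-`β`-alternating chain. -/
private def pcol (α β k : ℕ) : ℕ := if k % 2 = 0 then α else β

private lemma pcol_eq_pcol {α β : ℕ} (hab : α ≠ β) {i j : ℕ} :
    pcol α β i = pcol α β j ↔ i % 2 = j % 2 := by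
  rcases Nat.mod_two_eq_zero_or_one i with hi | hi <;>
    rcases Nat.mod_two_eq_zero_or_one j with hj | hj <;>
    simp [pcol, hi, hj, hab, Ne.symm hab] <;> omega


private lemma pcol_eq_of_ne {α β : ℕ} (hab : α ≠ β) {i j : ℕ} (h : i % 2 ≠ j % 2) :
    (if pcol α β i = α then β else α) = pcol α β j := by
  rcases Nat.mod_two_eq_zero_or_one i with hi | hi <;>
    rcases Nat.mod_two_eq_zero_or_one j with hj | hj <;>
    simp_all [pcol, hi, hj, hab, Ne.symm hab]

private lemma other_pcol_ne {α β : ℕ} (hab : α ≠ β) {i j : ℕ} (h : i % 2 ≠ j % 2) :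
    (if pcol α β i = α then β else α) ≠ (if pcol α β j = α then β else α) := by
  rw [pcol_eq_of_ne hab h, pcol_eq_of_ne hab (Ne.symm h)]
  intro hh
  have := (pcol_eq_pcol hab).mp hh
  omega

private lemma exists_other (G : Multigraph V E) {e : E} {x : V} (hx : x ∈ G.inc e) :
    ∃ y, G.inc e = s(x, y) ∧ x ≠ y := by
  refine ⟨Sym2.Mem.other hx, (Sym2.other_spec hx).symm, fun h => ?_⟩
  exact G.loopless e (by rw [← Sym2.other_spec hx, ← h]; exact Sym2.mk_isDiag_iff.mpr rfl)

private lemma uniq_color {G : Multigraph V E} {S : Set E} {c : E → ℕ} {n : ℕ}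
    (hc : G.ProperOn S c n) {e f : E} {x : V} (he : e ∈ S) (hf : f ∈ S)
    (hxe : x ∈ G.inc e) (hxf : x ∈ G.inc f) (hcol : c e = c f) : e = f := by
  by_contra h
  exact hc.2 e he f hf h ⟨x, hxe, hxf⟩ hcol

/-- An `α`-`β`-alternating chain of colored edges starting at `x0`:
`es k` joins `xs k` to `xs (k+1)` and has color `α` (`k` even) or `β` (`k` odd). -/
private def Chain (G : Multigraph V E) (S : Set E) (c : E → ℕ) (α β : ℕ) (x0 : V)
    (L : ℕ) (xs : ℕ → V) (es : ℕ → E) : Prop :=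
  xs 0 = x0 ∧ ∀ k, k < L →
    es k ∈ S ∧ c (es k) = pcol α β k ∧ G.inc (es k) = s(xs k, xs (k + 1))

/-- A maximal alternating chain: it cannot be extended at its end. -/
private def MaxChain (G : Multigraph V E) (S : Set E) (c : E → ℕ) (α β : ℕ) (x0 : V)
    (L : ℕ) (xs : ℕ → V) (es : ℕ → E) : Prop :=
  Chain G S c α β x0 L xs es ∧ ∀ f ∈ S, xs L ∈ G.inc f → c f ≠ pcol α β L

variable {G : Multigraph V E} {S : Set E} {c : E → ℕ} {n : ℕ} {α β : ℕ} {x0 : V}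
  {L : ℕ} {xs : ℕ → V} {es : ℕ → E}

private lemma Chain.mem_left (h : Chain G S c α β x0 L xs es) {k : ℕ} (hk : k < L) :
    xs k ∈ G.inc (es k) := by
  rw [(h.2 k hk).2.2]; exact Sym2.mem_mk_left _ _

private lemma Chain.mem_right (h : Chain G S c α β x0 L xs es) {k : ℕ} (hk : k < L) :
    xs (k + 1) ∈ G.inc (es k) := by
  rw [(h.2 k hk).2.2]; exact Sym2.mem_mk_right _ _

private lemma Chain.ne_step (h : Chain G S c α β x0 L xs es) {k : ℕ} (hk : k < L) :
    xs k ≠ xs (k + 1) := fun hh =>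
  G.loopless (es k) (by rw [(h.2 k hk).2.2]; exact Sym2.mk_isDiag_iff.mpr hh)

/-- The edges of an alternating chain starting at a `β`-deficient vertex are distinct. -/
private lemma chain_edge_nodup (hc : G.ProperOn S c n) (hab : α ≠ β)
    (h : Chain G S c α β x0 L xs es) (hu : G.MissingAt S c β x0) :
    ∀ j, j < L → ∀ i, i < j → es i ≠ es j := by
  intro j
  induction j using Nat.strong_induction_on with
  | _ j IH =>
    intro hjL i hij heq
    have hiL : i < L := lt_trans hij hjL
    obtain ⟨hiS, hic, hiinc⟩ := h.2 i hiL
    obtain ⟨hjS, hjc, hjinc⟩ := h.2 j hjL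
    have hpar : i % 2 = j % 2 := (pcol_eq_pcol hab).mp (by rw [← hic, ← hjc, heq])
    have hincs : s(xs i, xs (i + 1)) = s(xs j, xs (j + 1)) := by
      rw [← hiinc, ← hjinc, heq]
    rcases Sym2.eq_iff.mp hincs with ⟨h1, h2⟩ | ⟨h1, h2⟩
    · rcases Nat.eq_zero_or_pos i with hi0 | hipos
      · subst hi0
        obtain ⟨hS', hc', hinc'⟩ := h.2 (j - 1) (by omega)
        refine hu (es (j - 1)) hS' ?_ ?_
        · rw [hinc', show j - 1 + 1 = j from by omega, ← h1, h.1]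
          exact Sym2.mem_mk_right _ _
        · rw [hc']
          unfold pcol
          simp [show ¬ (j - 1) % 2 = 0 from by omega]
      · have he' : es (i - 1) = es (j - 1) := by
          refine uniq_color hc (h.2 (i - 1) (by omega)).1 (h.2 (j - 1) (by omega)).1
            (x := xs i) ?_ ?_ ?_
          · have := Chain.mem_right h (show i - 1 < L from by omega)
            rwa [show i - 1 + 1 = i from by omega] at this
          · have := Chain.mem_right h (show j - 1 < L from by omega)
            rw [show j - 1 + 1 = j from by omega] at this
            rwa [← h1] at this
          · rw [(h.2 (i - 1) (by omega)).2.1, (h.2 (j - 1) (by omega)).2.1]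
            exact (pcol_eq_pcol hab).mpr (by omega)
        exact IH (j - 1) (by omega) (by omega) (i - 1) (by omega) he'
    · have hne : i + 1 ≠ j := by intro hij1; omega
      have hlt : i + 1 < j := by omega
      have he' : es (i + 1) = es (j - 1) := by
        refine uniq_color hc (h.2 (i + 1) (by omega)).1 (h.2 (j - 1) (by omega)).1
          (x := xs (i + 1)) (Chain.mem_left h (by omega)) ?_ ?_
        · have := Chain.mem_right h (show j - 1 < L from by omega)
          rw [show j - 1 + 1 = j from by omega] at this
          rwa [← h2] at this
        · rw [(h.2 (i + 1) (by omega)).2.1, (h.2 (j - 1) (by omega)).2.1]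
          exact (pcol_eq_pcol hab).mpr (by omega)
      rcases eq_or_lt_of_le (show i + 1 ≤ j - 1 from by omega) with hE | hL2
      · refine Chain.ne_step h (show i + 1 < L from by omega) ?_
        rw [show i + 1 + 1 = j from by omega, ← h2]
      · exact IH (j - 1) (by omega) (by omega) (i + 1) hL2 he'

/-- The vertices of an alternating chain starting at a `β`-deficient vertex are distinct. -/
private lemma chain_vertex_nodup (hc : G.ProperOn S c n) (hab : α ≠ β)
    (h : Chain G S c α β x0 L xs es) (hu : G.MissingAt S c β x0) :
    ∀ m', m' ≤ L → ∀ m, m < m' → xs m ≠ xs m' := by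
  intro m' hm'L m hmm' heq
  by_cases hpar : m % 2 = m' % 2
  · rcases lt_or_eq_of_le hm'L with hm'lt | hm'eq
    · refine chain_edge_nodup hc hab h hu m' hm'lt m hmm' ?_
      refine uniq_color hc (h.2 m (by omega)).1 (h.2 m' hm'lt).1
        (Chain.mem_left h (by omega)) ?_ ?_
      · rw [heq]; exact Chain.mem_left h hm'lt
      · rw [(h.2 m (by omega)).2.1, (h.2 m' hm'lt).2.1]
        exact (pcol_eq_pcol hab).mpr hpar
    · subst hm'eq
      rcases Nat.eq_zero_or_pos m with hm0 | hmpos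
      · subst hm0
        refine hu (es (m' - 1)) (h.2 (m' - 1) (by omega)).1 ?_ ?_
        · have := Chain.mem_right h (show m' - 1 < m' from by omega)
          rw [show m' - 1 + 1 = m' from by omega] at this
          rw [← h.1, heq]
          exact this
        · rw [(h.2 (m' - 1) (by omega)).2.1]
          unfold pcol
          simp [show ¬ (m' - 1) % 2 = 0 from by omega]
      · have he' : es (m - 1) = es (m' - 1) := by
          refine uniq_color hc (h.2 (m - 1) (by omega)).1 (h.2 (m' - 1) (by omega)).1
            (x := xs m) ?_ ?_ ?_
          · have := Chain.mem_right h (show m - 1 < m' from by omega)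
            rwa [show m - 1 + 1 = m from by omega] at this
          · have := Chain.mem_right h (show m' - 1 < m' from by omega)
            rw [show m' - 1 + 1 = m' from by omega] at this
            rwa [← heq] at this
          · rw [(h.2 (m - 1) (by omega)).2.1, (h.2 (m' - 1) (by omega)).2.1]
            exact (pcol_eq_pcol hab).mpr (by omega)
        exact chain_edge_nodup hc hab h hu (m' - 1) (by omega) (m - 1) (by omega) he'
  · have hme : es m = es (m' - 1) := by
      refine uniq_color hc (h.2 m (by omega)).1 (h.2 (m' - 1) (by omega)).1
        (x := xs m) (Chain.mem_left h (by omega)) ?_ ?_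
      · have := Chain.mem_right h (show m' - 1 < L from by omega)
        rw [show m' - 1 + 1 = m' from by omega] at this
        rwa [← heq] at this
      · rw [(h.2 m (by omega)).2.1, (h.2 (m' - 1) (by omega)).2.1]
        exact (pcol_eq_pcol hab).mpr (by omega)
    rcases eq_or_lt_of_le (show m ≤ m' - 1 from by omega) with hE | hL2
    · refine Chain.ne_step h (show m < L from by omega) ?_
      rw [show m + 1 = m' from by omega]
      exact heq
    · exact chain_edge_nodup hc hab h hu (m' - 1) (by omega) m hL2 hme

private lemma chain_xinj (hc : G.ProperOn S c n) (hab : α ≠ β)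
    (h : Chain G S c α β x0 L xs es) (hu : G.MissingAt S c β x0)
    {a b : ℕ} (ha : a ≤ L) (hb : b ≤ L) (hxy : xs a = xs b) : a = b := by
  rcases lt_trichotomy a b with hl | he' | hl
  · exact absurd hxy (chain_vertex_nodup hc hab h hu b hb a hl)
  · exact he'
  · exact absurd hxy.symm (chain_vertex_nodup hc hab h hu a ha b hl)

/-- Existence of a maximal alternating chain from a `β`-deficient vertex. -/
private lemma exists_maxChain [Fintype E] (hc : G.ProperOn S c n) (hab : α ≠ β) (x0 : V)
    (hu : G.MissingAt S c β x0) (e0 : E) :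
    ∃ L xs es, MaxChain G S c α β x0 L xs es := by
  classical
  have hbound : ∀ (L : ℕ) (xs : ℕ → V) (es : ℕ → E),
      Chain G S c α β x0 L xs es → L ≤ Fintype.card E := by
    intro L xs es hch
    have hinj : Function.Injective (fun k : Fin L => es k.1) := by
      intro a b hab'
      by_contra hne
      have hne' : a.1 ≠ b.1 := fun hh => hne (Fin.ext hh)
      rcases lt_or_gt_of_ne hne' with hl | hl
      · exact chain_edge_nodup hc hab hch hu b.1 b.2 a.1 hl hab'
      · exact chain_edge_nodup hc hab hch hu a.1 a.2 b.1 hl hab'.symm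
    simpa using Fintype.card_le_of_injective _ hinj
  have hne : ∃ m, ¬ ∃ xs es, Chain G S c α β x0 m xs es := by
    refine ⟨Fintype.card E + 1, ?_⟩
    rintro ⟨xs, es, hch⟩
    have := hbound _ _ _ hch
    omega
  have hL0 : ¬ ∃ xs es, Chain G S c α β x0 (Nat.find hne) xs es := Nat.find_spec hne
  have hL0pos : Nat.find hne ≠ 0 := by
    intro h0
    refine hL0 ?_
    rw [h0]
    exact ⟨fun _ => x0, fun _ => e0, rfl, fun k hk => absurd hk (by omega)⟩
  set L := Nat.find hne - 1 with hLdef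
  have hPL : ∃ xs es, Chain G S c α β x0 L xs es := by
    by_contra hnc
    exact Nat.find_min hne (show L < Nat.find hne from by omega) hnc
  obtain ⟨xs, es, hch⟩ := hPL
  refine ⟨L, xs, es, hch, ?_⟩
  intro f hf hmem hcol
  obtain ⟨w, hw, -⟩ := exists_other G hmem
  apply hL0
  rw [show Nat.find hne = L + 1 from by omega]
  refine ⟨Function.update xs (L + 1) w, Function.update es L f, ?_, ?_⟩
  · rw [Function.update_of_ne (show (0 : ℕ) ≠ L + 1 from by omega)]
    exact hch.1
  · intro k hk
    rcases Nat.lt_succ_iff_lt_or_eq.mp hk with hkL | hkL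
    · obtain ⟨h1, h2, h3⟩ := hch.2 k hkL
      rw [Function.update_of_ne (show k ≠ L from by omega),
        Function.update_of_ne (show k ≠ L + 1 from by omega),
        Function.update_of_ne (show k + 1 ≠ L + 1 from by omega)]
      exact ⟨h1, h2, h3⟩
    · subst hkL
      rw [Function.update_self, Function.update_of_ne (show L ≠ L + 1 from by omega),
        Function.update_self]
      exact ⟨hf, hcol, hw⟩

/-- Maximal alternating chains from a given vertex agree. -/
private lemma maxChain_agree (hc : G.ProperOn S c n) {L' : ℕ} {xs' : ℕ → V} {es' : ℕ → E}
    (h : MaxChain G S c α β x0 L xs es) (h' : MaxChain G S c α β x0 L' xs' es') :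
    ∀ k, k ≤ L → k ≤ L' → xs k = xs' k := by
  intro k
  induction k with
  | zero => intro _ _; rw [h.1.1, h'.1.1]
  | succ k IH =>
    intro hkL hkL'
    have hv := IH (by omega) (by omega)
    have he' : es k = es' k := by
      refine uniq_color hc (h.1.2 k (by omega)).1 (h'.1.2 k (by omega)).1
        (Chain.mem_left h.1 (by omega)) ?_ ?_
      · rw [hv]; exact Chain.mem_left h'.1 (by omega)
      · rw [(h.1.2 k (by omega)).2.1, (h'.1.2 k (by omega)).2.1]
    have hincs : s(xs k, xs (k + 1)) = s(xs' k, xs' (k + 1)) := by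
      rw [← (h.1.2 k (by omega)).2.2, ← (h'.1.2 k (by omega)).2.2, he']
    rcases Sym2.eq_iff.mp hincs with ⟨-, h2⟩ | ⟨h1, h2⟩
    · exact h2
    · exfalso
      refine Chain.ne_step h.1 (show k < L from by omega) ?_
      rw [h2]
      exact hv

private lemma maxChain_le (hc : G.ProperOn S c n) {L' : ℕ} {xs' : ℕ → V} {es' : ℕ → E}
    (h : MaxChain G S c α β x0 L xs es) (h' : MaxChain G S c α β x0 L' xs' es') :
    L ≤ L' := by
  by_contra hlt
  push_neg at hlt
  have hv := maxChain_agree hc h h' L' (le_of_lt hlt) le_rfl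
  exact h'.2 (es L') (h.1.2 L' hlt).1 (by rw [← hv]; exact Chain.mem_left h.1 hlt)
    (h.1.2 L' hlt).2.1

private lemma maxChain_end_eq (hc : G.ProperOn S c n) {L' : ℕ} {xs' : ℕ → V} {es' : ℕ → E}
    (h : MaxChain G S c α β x0 L xs es) (h' : MaxChain G S c α β x0 L' xs' es') :
    xs L = xs' L' := by
  have hLL : L = L' := le_antisymm (maxChain_le hc h h') (maxChain_le hc h' h)
  subst hLL
  exact maxChain_agree hc h h' L le_rfl le_rfl

/-- Reversing a maximal even alternating chain gives a maximal chain with colors swapped. -/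
private lemma maxChain_reverse (h : MaxChain G S c α β x0 L xs es)
    (hu : G.MissingAt S c β x0) (hL : L % 2 = 0) :
    MaxChain G S c β α (xs L) L (fun m => xs (L - m)) (fun k => es (L - 1 - k)) := by
  constructor
  · constructor
    · show xs (L - 0) = xs L
      rw [Nat.sub_zero]
    · intro k hk
      obtain ⟨h1, h2, h3⟩ := h.1.2 (L - 1 - k) (by omega)
      refine ⟨h1, ?_, ?_⟩
      · show c (es (L - 1 - k)) = pcol β α k
        rw [h2]
        unfold pcol
        by_cases hk2 : k % 2 = 0
        · simp [hk2, show ¬ (L - 1 - k) % 2 = 0 from by omega]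
        · simp [hk2, show (L - 1 - k) % 2 = 0 from by omega]
      · show G.inc (es (L - 1 - k)) = s(xs (L - k), xs (L - (k + 1)))
        rw [show L - 1 - k + 1 = L - k from by omega] at h3
        rw [show L - (k + 1) = L - 1 - k from by omega, h3]
        exact Sym2.eq_swap
  · intro f hf hmem
    have hmem' : x0 ∈ G.inc f := by
      have : xs (L - L) ∈ G.inc f := hmem
      rwa [Nat.sub_self, h.1.1] at this
    have hpL : pcol β α L = β := by unfold pcol; simp [hL]
    rw [hpL]
    exact hu f hf hmem'

/-- If the chain avoids `v`, swapping colors along it and coloring `e` with `α`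
contradicts maximality of `S`. -/
private lemma swap_contra [Fintype V] [Fintype E] (hc : G.ProperOn S c G.maxDeg)
    (hS : G.IsMaxColorable S) (hab : α ≠ β)
    (hα : α < G.maxDeg) (hβ : β < G.maxDeg)
    {u v : V} {e : E} (he : e ∉ S) (hinc : G.inc e = s(u, v))
    (hαv : G.MissingAt S c α v) (hβu : G.MissingAt S c β u)
    (h : MaxChain G S c α β u L xs es)
    (hvout : ∀ m, m ≤ L → xs m ≠ v) : False := by
  classical
  have hch := h.1
  have hxinj : ∀ a, a ≤ L → ∀ b, b ≤ L → xs a = xs b → a = b := fun a ha b hb hxy =>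
    chain_xinj hc hab hch hβu ha hb hxy
  set c' : E → ℕ := fun f => if ∃ k, k < L ∧ es k = f then (if c f = α then β else α) else c f
    with hc'def
  have hc'W : ∀ k, k < L → c' (es k) = (if pcol α β k = α then β else α) := by
    intro k hk
    have hW : ∃ k', k' < L ∧ es k' = es k := ⟨k, hk, rfl⟩
    show (if ∃ k', k' < L ∧ es k' = es k then (if c (es k) = α then β else α) else c (es k)) = _
    rw [if_pos hW, (hch.2 k hk).2.1]
  have hc'notW : ∀ f, (¬ ∃ k, k < L ∧ es k = f) → c' f = c f := by
    intro f hf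
    show (if ∃ k, k < L ∧ es k = f then (if c f = α then β else α) else c f) = c f
    rw [if_neg hf]
  have hmemidx : ∀ k, k < L → ∀ y, y ∈ G.inc (es k) → y = xs k ∨ y = xs (k + 1) := by
    intro k hk y hy
    rw [(hch.2 k hk).2.2] at hy
    exact Sym2.mem_iff.mp hy
  -- after the swap, `α` is missing at `u`
  have hu' : ∀ g ∈ S, u ∈ G.inc g → c' g ≠ α := by
    intro g hg hmem hgα
    by_cases hWg : ∃ k, k < L ∧ es k = g
    · obtain ⟨i, hiL, rfl⟩ := hWg
      rw [hc'W i hiL] at hgα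
      have hi2 : i % 2 = 1 := by
        by_contra hi2
        have hpi : pcol α β i = α := by unfold pcol; simp [show i % 2 = 0 from by omega]
        rw [if_pos hpi] at hgα
        exact hab hgα.symm
      rcases hmemidx i hiL u hmem with h1 | h1
      · have : (0 : ℕ) = i := hxinj 0 (by omega) i (by omega) (by rw [hch.1]; exact h1)
        omega
      · have : (0 : ℕ) = i + 1 := hxinj 0 (by omega) (i + 1) (by omega)
          (by rw [hch.1]; exact h1)
        omega
    · rw [hc'notW g hWg] at hgα
      rcases Nat.eq_zero_or_pos L with hL0 | hLpos
      · refine h.2 g hg ?_ ?_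
        · rw [hL0, hch.1]; exact hmem
        · rw [hgα, hL0]; unfold pcol; simp
      · have hg0 : g = es 0 := by
          refine uniq_color hc hg (hch.2 0 hLpos).1 (x := u) hmem ?_ ?_
          · rw [← hch.1]; exact Chain.mem_left hch hLpos
          · rw [hgα, (hch.2 0 hLpos).2.1]; unfold pcol; simp
        exact hWg ⟨0, hLpos, hg0.symm⟩
  -- after the swap, `α` is still missing at `v`
  have hv' : ∀ g ∈ S, v ∈ G.inc g → c' g ≠ α := by
    intro g hg hmem
    have hWg : ¬ ∃ k, k < L ∧ es k = g := by
      rintro ⟨k, hkL, rfl⟩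
      rcases hmemidx k hkL v hmem with h1 | h1
      · exact hvout k (by omega) h1.symm
      · exact hvout (k + 1) (by omega) h1.symm
    rw [hc'notW g hWg]
    exact hαv g hg hmem
  -- the swapped coloring is proper on `S`
  have hprop : ∀ f ∈ S, ∀ g ∈ S, f ≠ g → (∃ y, y ∈ G.inc f ∧ y ∈ G.inc g) →
      c' f ≠ c' g := by
    have asym : ∀ i, i < L → ∀ g ∈ S, (¬ ∃ k, k < L ∧ es k = g) →
        (∃ y, y ∈ G.inc (es i) ∧ y ∈ G.inc g) → c' (es i) ≠ c' g := by
      rintro i hiL g hg hWg ⟨y, hyf, hyg⟩ hcc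
      rw [hc'W i hiL, hc'notW g hWg] at hcc
      rcases hmemidx i hiL y hyf with h1 | h1
      · rcases Nat.eq_zero_or_pos i with hi0 | hipos
        · subst hi0
          refine hβu g hg (by rw [← hch.1, ← h1]; exact hyg) ?_
          rw [← hcc]; unfold pcol; simp
        · have hgi : g = es (i - 1) := by
            refine uniq_color hc hg (hch.2 (i - 1) (by omega)).1 (x := xs i)
              (h1 ▸ hyg) ?_ ?_
            · have := Chain.mem_right hch (show i - 1 < L from by omega)
              rwa [show i - 1 + 1 = i from by omega] at this
            · rw [← hcc, (hch.2 (i - 1) (by omega)).2.1]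
              exact pcol_eq_of_ne hab (by omega)
          exact hWg ⟨i - 1, by omega, hgi.symm⟩
      · rcases lt_or_eq_of_le (show i + 1 ≤ L from hiL) with hi1L | hi1L
        · have hgi : g = es (i + 1) := by
            refine uniq_color hc hg (hch.2 (i + 1) hi1L).1 (x := xs (i + 1))
              (h1 ▸ hyg) (Chain.mem_left hch hi1L) ?_
            rw [← hcc, (hch.2 (i + 1) hi1L).2.1]
            exact pcol_eq_of_ne hab (by omega)
          exact hWg ⟨i + 1, hi1L, hgi.symm⟩
        · refine h.2 g hg (by rw [← hi1L, ← h1]; exact hyg) ?_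
          rw [← hcc, ← hi1L]
          exact pcol_eq_of_ne hab (by omega)
    rintro f hf g hg hfg ⟨y, hyf, hyg⟩ hcc
    by_cases hWf : ∃ k, k < L ∧ es k = f <;> by_cases hWg : ∃ k, k < L ∧ es k = g
    · obtain ⟨i, hiL, rfl⟩ := hWf
      obtain ⟨j, hjL, rfl⟩ := hWg
      have hij : i ≠ j := fun hh => hfg (by rw [hh])
      have hidx : j = i + 1 ∨ i = j + 1 := by
        rcases hmemidx i hiL y hyf with h1 | h1 <;> rcases hmemidx j hjL y hyg with h2 | h2
        · exact absurd (hxinj i (by omega) j (by omega) (h1.symm.trans h2)) hij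
        · have := hxinj i (by omega) (j + 1) (by omega) (h1.symm.trans h2)
          exact Or.inr this
        · have := hxinj (i + 1) (by omega) j (by omega) (h1.symm.trans h2)
          exact Or.inl this.symm
        · have := hxinj (i + 1) (by omega) (j + 1) (by omega) (h1.symm.trans h2)
          omega
      rw [hc'W i hiL, hc'W j hjL] at hcc
      exact other_pcol_ne hab (show i % 2 ≠ j % 2 from by omega) hcc
    · obtain ⟨i, hiL, rfl⟩ := hWf
      exact asym i hiL g hg hWg ⟨y, hyf, hyg⟩ hcc
    · obtain ⟨j, hjL, rfl⟩ := hWg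
      exact asym j hjL f hf hWf ⟨y, hyg, hyf⟩ hcc.symm
    · rw [hc'notW f hWf, hc'notW g hWg] at hcc
      exact hc.2 f hf g hg hfg ⟨y, hyf, hyg⟩ hcc
  have hbound : ∀ f ∈ S, c' f < G.maxDeg := by
    intro f hf
    by_cases hWf : ∃ k, k < L ∧ es k = f
    · obtain ⟨i, hiL, rfl⟩ := hWf
      rw [hc'W i hiL]
      split
      · exact hβ
      · exact hα
    · rw [hc'notW f hWf]
      exact hc.1 f hf
  -- extend the coloring to `insert e S`
  have hproper : G.ProperOn (insert e S) (Function.update c' e α) G.maxDeg := by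
    constructor
    · intro f hf
      rcases Set.mem_insert_iff.mp hf with rfl | hfS
      · rw [Function.update_self]; exact hα
      · rw [Function.update_of_ne (by rintro rfl; exact he hfS)]
        exact hbound f hfS
    · rintro f hf g hg hfg hshare
      rcases Set.mem_insert_iff.mp hf with rfl | hfS <;>
        rcases Set.mem_insert_iff.mp hg with rfl | hgS
      · exact absurd rfl hfg
      · obtain ⟨y, hyf, hyg⟩ := hshare
        rw [Function.update_self, Function.update_of_ne (by rintro rfl; exact he hgS)]
        rw [hinc] at hyf
        rcases Sym2.mem_iff.mp hyf with rfl | rfl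
        · exact fun hh => hu' g hgS hyg hh.symm
        · exact fun hh => hv' g hgS hyg hh.symm
      · obtain ⟨y, hyf, hyg⟩ := hshare
        rw [Function.update_self, Function.update_of_ne (by rintro rfl; exact he hfS)]
        rw [hinc] at hyg
        rcases Sym2.mem_iff.mp hyg with rfl | rfl
        · exact hu' f hfS hyf
        · exact hv' f hfS hyf
      · rw [Function.update_of_ne (by rintro rfl; exact he hfS),
          Function.update_of_ne (by rintro rfl; exact he hgS)]
        exact hprop f hfS g hgS hfg hshare
  have hle := hS.2 _ ⟨_, hproper⟩
  rw [Set.ncard_insert_of_notMem he (Set.toFinite S)] at hle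
  omega

/-- The maximal alternating chain from `u` must end at `v`, after an even number of steps. -/
private lemma maxChain_end [Fintype V] [Fintype E] (hc : G.ProperOn S c G.maxDeg)
    (hS : G.IsMaxColorable S) (hab : α ≠ β)
    (hα : α < G.maxDeg) (hβ : β < G.maxDeg)
    {u v : V} {e : E} (he : e ∉ S) (hinc : G.inc e = s(u, v))
    (hαv : G.MissingAt S c α v) (hβu : G.MissingAt S c β u)
    (h : MaxChain G S c α β u L xs es) : xs L = v ∧ L % 2 = 0 := by
  have huv : u ≠ v := by
    intro hh
    exact G.loopless e (by rw [hinc, hh]; exact Sym2.mk_isDiag_iff.mpr rfl)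
  by_cases hvin : ∃ m, m ≤ L ∧ xs m = v
  · obtain ⟨m, hmL, hmv⟩ := hvin
    have hm0 : m ≠ 0 := by
      intro h0
      subst h0
      rw [h.1.1] at hmv
      exact huv hmv
    rcases lt_or_eq_of_le hmL with hmlt | hmeq
    · exfalso
      by_cases hm2 : m % 2 = 0
      · refine hαv (es m) (h.1.2 m hmlt).1 (hmv ▸ Chain.mem_left h.1 hmlt) ?_
        rw [(h.1.2 m hmlt).2.1]; unfold pcol; simp [hm2]
      · refine hαv (es (m - 1)) (h.1.2 (m - 1) (by omega)).1 ?_ ?_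
        · have := Chain.mem_right h.1 (show m - 1 < L from by omega)
          rw [show m - 1 + 1 = m from by omega] at this
          exact hmv ▸ this
        · rw [(h.1.2 (m - 1) (by omega)).2.1]
          unfold pcol
          simp [show (m - 1) % 2 = 0 from by omega]
    · subst hmeq
      refine ⟨hmv, ?_⟩
      by_contra hm2
      refine hαv (es (m - 1)) (h.1.2 (m - 1) (by omega)).1 ?_ ?_
      · have := Chain.mem_right h.1 (show m - 1 < m from by omega)
        rw [show m - 1 + 1 = m from by omega] at this
        exact hmv ▸ this
      · rw [(h.1.2 (m - 1) (by omega)).2.1]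
        unfold pcol
        simp [show (m - 1) % 2 = 0 from by omega]
  · exfalso
    push_neg at hvin
    exact swap_contra hc hS hab hα hβ he hinc hαv hβu h hvin

/-- If a common color is missing at both ends of an uncolored edge, `S` is not maximum. -/
private lemma add_contra [Fintype V] [Fintype E] (hc : G.ProperOn S c G.maxDeg)
    (hS : G.IsMaxColorable S) {e : E} {u v : V} {γ : ℕ}
    (he : e ∉ S) (hinc : G.inc e = s(u, v)) (hγ : γ < G.maxDeg)
    (hu : G.MissingAt S c γ u) (hv : G.MissingAt S c γ v) : False := by
  classical
  have hproper : G.ProperOn (insert e S) (Function.update c e γ) G.maxDeg := by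
    constructor
    · intro f hf
      rcases Set.mem_insert_iff.mp hf with rfl | hfS
      · rw [Function.update_self]; exact hγ
      · rw [Function.update_of_ne (by rintro rfl; exact he hfS)]
        exact hc.1 f hfS
    · rintro f hf g hg hfg hshare
      rcases Set.mem_insert_iff.mp hf with rfl | hfS <;>
        rcases Set.mem_insert_iff.mp hg with rfl | hgS
      · exact absurd rfl hfg
      · obtain ⟨y, hyf, hyg⟩ := hshare
        rw [Function.update_self, Function.update_of_ne (by rintro rfl; exact he hgS)]
        rw [hinc] at hyf
        rcases Sym2.mem_iff.mp hyf with rfl | rfl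
        · exact fun hh => hu g hgS hyg hh.symm
        · exact fun hh => hv g hgS hyg hh.symm
      · obtain ⟨y, hyf, hyg⟩ := hshare
        rw [Function.update_self, Function.update_of_ne (by rintro rfl; exact he hfS)]
        rw [hinc] at hyg
        rcases Sym2.mem_iff.mp hyg with rfl | rfl
        · exact hu f hfS hyf
        · exact hv f hfS hyf
      · rw [Function.update_of_ne (by rintro rfl; exact he hfS),
          Function.update_of_ne (by rintro rfl; exact he hgS)]
        exact hc.2 f hfS g hgS hfg hshare
  have hle := hS.2 _ ⟨_, hproper⟩
  rw [Set.ncard_insert_of_notMem he (Set.toFinite S)] at hle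
  omega

/-- Two distinct uncolored edges at `v` whose other endpoints miss the same color `β`
must in fact have the same other endpoint. -/
private lemma same_missing_contra [Fintype V] [Fintype E]
    (hc : G.ProperOn S c G.maxDeg) (hS : G.IsMaxColorable S)
    {e e' : E} {u u' v : V} {α β : ℕ}
    (he : e ∉ S) (he' : e' ∉ S)
    (hince : G.inc e = s(u, v)) (hince' : G.inc e' = s(u', v))
    (huu' : u ≠ u') (hα : α < G.maxDeg) (hαv : G.MissingAt S c α v)
    (hβ : β < G.maxDeg) (hβu : G.MissingAt S c β u) (hβu' : G.MissingAt S c β u') :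
    False := by
  have hab : α ≠ β := by
    rintro rfl
    exact add_contra hc hS he hince hα hβu hαv
  obtain ⟨L, xs, es, h1⟩ := exists_maxChain hc hab u hβu e
  obtain ⟨L', xs', es', h2⟩ := exists_maxChain hc hab u' hβu' e
  obtain ⟨hend1, hpar1⟩ := maxChain_end hc hS hab hα hβ he hince hαv hβu h1
  obtain ⟨hend2, hpar2⟩ := maxChain_end hc hS hab hα hβ he' hince' hαv hβu' h2
  have hr1 := maxChain_reverse h1 hβu hpar1
  have hr2 := maxChain_reverse h2 hβu' hpar2
  rw [hend1] at hr1
  rw [hend2] at hr2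
  have hee := maxChain_end_eq hc hr1 hr2
  simp only [Nat.sub_self] at hee
  rw [h1.1.1, h2.1.1] at hee
  exact huu' hee

private lemma exists_injOn_of_ncard_le {A : Type} (s : Set A) (t : Set ℕ)
    (hs : s.Finite) (ht : t.Finite) (hle : s.ncard ≤ t.ncard) :
    ∃ ι : A → ℕ, Set.InjOn ι s ∧ Set.MapsTo ι s t := by
  classical
  have hcard : hs.toFinset.card ≤ ht.toFinset.card := by
    rwa [← Set.ncard_eq_toFinset_card s hs, ← Set.ncard_eq_toFinset_card t ht]
  refine ⟨fun x => if hx : x ∈ hs.toFinset then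
      (ht.toFinset.equivFin.symm (Fin.castLE hcard (hs.toFinset.equivFin ⟨x, hx⟩)) : ℕ)
    else 0, ?_, ?_⟩
  · intro x hxs y hys hxy
    have hx : x ∈ hs.toFinset := hs.mem_toFinset.mpr hxs
    have hy : y ∈ hs.toFinset := hs.mem_toFinset.mpr hys
    simp only [dif_pos hx, dif_pos hy] at hxy
    have h2' := ht.toFinset.equivFin.symm.injective (Subtype.coe_injective hxy)
    have h4' : hs.toFinset.equivFin ⟨x, hx⟩ = hs.toFinset.equivFin ⟨y, hy⟩ := by
      apply Fin.ext
      have := congrArg Fin.val h2'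
      simpa using this
    have := hs.toFinset.equivFin.injective h4'
    simpa using congrArg Subtype.val this
  · intro x hxs
    have hx : x ∈ hs.toFinset := hs.mem_toFinset.mpr hxs
    show (if hx' : x ∈ hs.toFinset then _ else 0) ∈ t
    rw [dif_pos hx]
    exact ht.mem_toFinset.mp (ht.toFinset.equivFin.symm _).2

private lemma deg_split (G : Multigraph V E) [Fintype E] (S : Set E) (x : V) :
    G.deg x = G.degOn S x + ({f | f ∉ S ∧ x ∈ G.inc f} : Set E).ncard := by
  classical
  have hsplit : {e : E | e ∈ Set.univ ∧ x ∈ G.inc e} =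
      {f | f ∈ S ∧ x ∈ G.inc f} ∪ {f | f ∉ S ∧ x ∈ G.inc f} := by
    ext f
    simp only [Set.mem_setOf_eq, Set.mem_union, Set.mem_univ, true_and]
    tauto
  show ({e : E | e ∈ Set.univ ∧ x ∈ G.inc e}).ncard = _
  rw [hsplit, Set.ncard_union_eq ?_ (Set.toFinite _) (Set.toFinite _)]
  · rfl
  · rw [Set.disjoint_left]
    rintro f ⟨h1, -⟩ ⟨h2, -⟩
    exact h2 h1

/-- Key counting lemma: at every vertex, at most half of the incident edges are uncolored. -/
private lemma key_bound [Fintype V] [Fintype E] (G : Multigraph V E) (S : Set E)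
    (hS : G.IsMaxColorable S) (v : V) : G.deg v ≤ 2 * G.degOn S v := by
  classical
  obtain ⟨c, hc⟩ := hS.1
  have hsplit := deg_split G S v
  suffices h : ({f | f ∉ S ∧ v ∈ G.inc f} : Set E).ncard ≤ G.degOn S v by omega
  rcases Set.eq_empty_or_nonempty ({f | f ∉ S ∧ v ∈ G.inc f} : Set E) with hU | hUne
  · rw [hU]; simp
  have hdegle : ∀ x : V, G.deg x ≤ G.maxDeg := fun x => Finset.le_sup (Finset.mem_univ x)
  have hMfin : ∀ x : V, ({γ | γ < G.maxDeg ∧ G.MissingAt S c γ x} : Set ℕ).Finite :=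
    fun x => Set.Finite.subset (Set.finite_Iio G.maxDeg) (fun γ hγ => hγ.1)
  have hMcard : ∀ x : V,
      G.maxDeg - G.degOn S x ≤ ({γ | γ < G.maxDeg ∧ G.MissingAt S c γ x} : Set ℕ).ncard := by
    intro x
    have hsub : (↑(Finset.range G.maxDeg) : Set ℕ) \ (c '' {f | f ∈ S ∧ x ∈ G.inc f}) ⊆
        {γ | γ < G.maxDeg ∧ G.MissingAt S c γ x} := by
      rintro γ ⟨hγ1, hγ2⟩
      refine ⟨by simpa using hγ1, fun f hf hmem hcf => hγ2 ⟨f, ⟨hf, hmem⟩, hcf⟩⟩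
    have h1 : ((↑(Finset.range G.maxDeg) : Set ℕ)).ncard ≤
        ((↑(Finset.range G.maxDeg) : Set ℕ) \ (c '' {f | f ∈ S ∧ x ∈ G.inc f})).ncard +
          (c '' {f | f ∈ S ∧ x ∈ G.inc f}).ncard := by
      refine le_trans (Set.ncard_le_ncard ?_ (Set.Finite.union
        (Set.Finite.diff (Set.toFinite _)) (Set.toFinite _))) (Set.ncard_union_le _ _)
      rw [Set.diff_union_self]
      exact Set.subset_union_left
    have h2 : (c '' {f | f ∈ S ∧ x ∈ G.inc f}).ncard ≤ G.degOn S x :=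
      Set.ncard_image_le (Set.toFinite _)
    have h3 : ((↑(Finset.range G.maxDeg) : Set ℕ)).ncard = G.maxDeg := by
      rw [Set.ncard_coe_finset, Finset.card_range]
    have h4 := Set.ncard_le_ncard hsub (hMfin x)
    omega
  have hUMx : ∀ x : V, ({f | f ∉ S ∧ x ∈ G.inc f} : Set E).ncard ≤
      ({γ | γ < G.maxDeg ∧ G.MissingAt S c γ x} : Set ℕ).ncard := by
    intro x
    have e1 := deg_split G S x
    have e2 := hdegle x
    have e3 := hMcard x
    have e4 : G.degOn S x ≤ G.deg x := by omega
    omega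
  have hι : ∀ x : V, ∃ ι : E → ℕ,
      Set.InjOn ι {f | f ∉ S ∧ x ∈ G.inc f} ∧
      Set.MapsTo ι {f | f ∉ S ∧ x ∈ G.inc f} {γ | γ < G.maxDeg ∧ G.MissingAt S c γ x} :=
    fun x => exists_injOn_of_ncard_le _ _ (Set.toFinite _) (hMfin x) (hUMx x)
  choose ι hιinj hιmaps using hι
  -- the color `α` missing at `v`
  have hαex : ({γ | γ < G.maxDeg ∧ G.MissingAt S c γ v} : Set ℕ).Nonempty := by
    have h1 := hMcard v
    have h2 : 0 < ({f | f ∉ S ∧ v ∈ G.inc f} : Set E).ncard :=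
      (Set.ncard_pos (Set.toFinite _)).mpr hUne
    have h3 := hdegle v
    have h4 : 0 < ({γ | γ < G.maxDeg ∧ G.MissingAt S c γ v} : Set ℕ).ncard := by omega
    exact (Set.ncard_pos (hMfin v)).mp h4
  obtain ⟨α, hαΔ, hαv⟩ := hαex
  -- the other endpoint of an uncolored edge at `v`
  have hother : ∀ f ∈ ({f | f ∉ S ∧ v ∈ G.inc f} : Set E), ∃ y, G.inc f = s(v, y) ∧ v ≠ y :=
    fun f hf => exists_other G hf.2
  choose w hw hwne using hother
  have hwU : ∀ f (hf : f ∈ ({f | f ∉ S ∧ v ∈ G.inc f} : Set E)),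
      f ∈ ({g | g ∉ S ∧ (w f hf) ∈ G.inc g} : Set E) :=
    fun f hf => ⟨hf.1, by rw [hw f hf]; exact Sym2.mem_mk_right _ _⟩
  have hφmem : ∀ f (hf : f ∈ ({f | f ∉ S ∧ v ∈ G.inc f} : Set E)),
      ι (w f hf) f ∈ c '' {g | g ∈ S ∧ v ∈ G.inc g} := by
    intro f hf
    have hβM := hιmaps (w f hf) (hwU f hf)
    by_contra hβnp
    have hβv : G.MissingAt S c (ι (w f hf) f) v :=
      fun g hg hmem hcg => hβnp ⟨g, ⟨hg, hmem⟩, hcg⟩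
    exact add_contra hc hS hf.1 ((hw f hf).trans Sym2.eq_swap) hβM.1 hβM.2 hβv
  have hφinj : Set.InjOn
      (fun f => if hf : f ∈ ({f | f ∉ S ∧ v ∈ G.inc f} : Set E) then ι (w f hf) f else 0)
      ({f | f ∉ S ∧ v ∈ G.inc f} : Set E) := by
    intro f hf g hg heq
    simp only [dif_pos hf, dif_pos hg] at heq
    by_cases hww : w f hf = w g hg
    · refine hιinj (w f hf) (hwU f hf) ?_ ?_
      · have := hwU g hg
        rw [← hww] at this
        exact this
      · rw [heq, hww]
    · exfalso
      have hM1 := hιmaps (w f hf) (hwU f hf)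
      have hM2 := hιmaps (w g hg) (hwU g hg)
      refine same_missing_contra hc hS hf.1 hg.1 ((hw f hf).trans Sym2.eq_swap)
        ((hw g hg).trans Sym2.eq_swap) hww hαΔ hαv hM1.1 hM1.2 ?_
      rw [heq]
      exact hM2.2
  have himg : (fun f => if hf : f ∈ ({f | f ∉ S ∧ v ∈ G.inc f} : Set E) then ι (w f hf) f else 0)
      '' ({f | f ∉ S ∧ v ∈ G.inc f} : Set E) ⊆ c '' {g | g ∈ S ∧ v ∈ G.inc g} := by
    rintro γ ⟨f, hf, rfl⟩
    show (if hf' : f ∈ ({f | f ∉ S ∧ v ∈ G.inc f} : Set E) then ι (w f hf') f else 0) ∈ _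
    rw [dif_pos hf]
    exact hφmem f hf
  calc ({f | f ∉ S ∧ v ∈ G.inc f} : Set E).ncard
      = ((fun f => if hf : f ∈ ({f | f ∉ S ∧ v ∈ G.inc f} : Set E) then ι (w f hf) f else 0)
          '' ({f | f ∉ S ∧ v ∈ G.inc f} : Set E)).ncard := (Set.ncard_image_of_injOn hφinj).symm
    _ ≤ (c '' {g | g ∈ S ∧ v ∈ G.inc g}).ncard := Set.ncard_le_ncard himg (Set.toFinite _)
    _ ≤ G.degOn S v := Set.ncard_image_le (Set.toFinite _)

end KempeAux

/-- Theorem 6.3 of the paper. If `H` (edge set `S`) is a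
maximum `Δ(G)`-edge-colorable subgraph of a loopless multigraph `G`, then
`δ(H) ≥ ⌈δ(G)/2⌉`. -/
theorem maxColorable_minDegree_bound
    {V E : Type} [Fintype V] [Nonempty V] [Fintype E] (G : Multigraph V E)
    (S : Set E) (hS : G.IsMaxColorable S) :
    (G.minDegOn Set.univ + 1) / 2 ≤ G.minDegOn S := by
  classical
  obtain ⟨v, -, hv⟩ := Finset.exists_mem_eq_inf' (Finset.univ_nonempty) (G.degOn S)
  have h1 : G.minDegOn Set.univ ≤ G.deg v := Finset.inf'_le _ (Finset.mem_univ v)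
  have h2 := key_bound G S hS v
  have h3 : G.minDegOn S = G.degOn S v := hv
  omega
end

section
/- Every finite simple graph G contains a maximum Δ(G)-edge-colorable subgraph H such that the set of edges E(G)\E(H) forms a matching in G (no two of these edges share a vertex). -/
variable {V : Type}

/-- `c` is a proper edge coloring of the set `S` of edges, using the `n`
colors `0, …, n-1`: distinct edges of `S` sharing a vertex get distinct
colors. -/
def EdgeProperOn (S : Set (Sym2 V)) (c : Sym2 V → ℕ) (n : ℕ) : Prop :=
  (∀ e ∈ S, c e < n) ∧
    ∀ e ∈ S, ∀ f ∈ S, e ≠ f → (∃ v : V, v ∈ e ∧ v ∈ f) → c e ≠ c f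

/-- The set `S` of edges is properly `n`-edge-colorable. -/
def EdgeColorableOn (S : Set (Sym2 V)) (n : ℕ) : Prop :=
  ∃ c : Sym2 V → ℕ, EdgeProperOn S c n

/-- The chromatic index of the graph with edge set `S`. -/
noncomputable def edgeChromIndex (S : Set (Sym2 V)) : ℕ :=
  sInf {n | EdgeColorableOn S n}

/-- The degree of the vertex `x` in the graph with edge set `S`. -/
noncomputable def edgeDegOn (S : Set (Sym2 V)) (x : V) : ℕ :=
  {e | e ∈ S ∧ x ∈ e}.ncard

/-- The maximum degree of the graph with edge set `S`. -/
noncomputable def edgeMaxDegOn [Fintype V] (S : Set (Sym2 V)) : ℕ :=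
  Finset.univ.sup (edgeDegOn S)

/-- `S` is (the edge set of) a maximum `Δ(G)`-edge-colorable subgraph of the
simple graph `G`: among the `Δ(G)`-edge-colorable subgraphs of `G` it has as
many edges as possible. -/
def SimpleGraph.IsMaxColorableSub [Fintype V] (G : SimpleGraph V) [DecidableRel G.Adj]
    (S : Set (Sym2 V)) : Prop :=
  S ⊆ G.edgeSet ∧ EdgeColorableOn S G.maxDegree ∧
    ∀ T : Set (Sym2 V), T ⊆ G.edgeSet → EdgeColorableOn T G.maxDegree →
      T.ncard ≤ S.ncard

section Aux

/-- auxiliary: number of vertices covered by uncovered edges -/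
noncomputable def auxPsi [Fintype V] (G : SimpleGraph V) (T : Set (Sym2 V)) : ℕ :=
  {x : V | ∃ g, g ∈ G.edgeSet ∧ g ∉ T ∧ x ∈ g}.ncard

noncomputable def auxTheta [Fintype V] (G : SimpleGraph V) (T : Set (Sym2 V)) : ℕ :=
  T.ncard * (Fintype.card V + 1) + auxPsi G T

lemma auxPsi_le [Fintype V] (G : SimpleGraph V) (T : Set (Sym2 V)) :
    auxPsi G T ≤ Fintype.card V := by
  classical
  have := Set.ncard_le_ncard (Set.subset_univ {x : V | ∃ g, g ∈ G.edgeSet ∧ g ∉ T ∧ x ∈ g})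
    (Set.finite_univ)
  simpa [auxPsi, Set.ncard_univ] using this

lemma auxTheta_lt_of_card [Fintype V] (G : SimpleGraph V) (T T' : Set (Sym2 V))
    (h : T.ncard < T'.ncard) : auxTheta G T < auxTheta G T' := by
  have h1 : auxPsi G T < Fintype.card V + 1 := Nat.lt_succ_of_le (auxPsi_le G T)
  have : T.ncard * (Fintype.card V + 1) + (Fintype.card V + 1) ≤
      T'.ncard * (Fintype.card V + 1) := by
    calc T.ncard * (Fintype.card V + 1) + (Fintype.card V + 1)
        = (T.ncard + 1) * (Fintype.card V + 1) := by ring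
      _ ≤ T'.ncard * (Fintype.card V + 1) := Nat.mul_le_mul_right _ h
  unfold auxTheta
  omega

lemma auxTheta_lt_of_psi [Fintype V] (G : SimpleGraph V) (T T' : Set (Sym2 V))
    (h : T.ncard = T'.ncard) (h2 : auxPsi G T < auxPsi G T') :
    auxTheta G T < auxTheta G T' := by
  unfold auxTheta; rw [h]; omega

/-- there is a missing color at any vertex incident to an uncovered edge -/
lemma exists_missing [Fintype V] (G : SimpleGraph V) [DecidableRel G.Adj]
    (S : Set (Sym2 V)) (hSE : S ⊆ G.edgeSet) (c : Sym2 V → ℕ)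
    (hc : EdgeProperOn S c G.maxDegree) (x : V) (g₀ : Sym2 V)
    (hg₀ : g₀ ∈ G.edgeSet) (hg₀S : g₀ ∉ S) (hx : x ∈ g₀) :
    ∃ a, a < G.maxDegree ∧ ∀ g ∈ S, x ∈ g → c g ≠ a := by
  classical
  set n := G.maxDegree with hn
  set A : Finset (Sym2 V) := (G.incidenceFinset x).filter (· ∈ S) with hA
  have hAsub : A ⊆ G.incidenceFinset x := Finset.filter_subset _ _
  have hg₀inc : g₀ ∈ G.incidenceFinset x := by
    rw [SimpleGraph.mem_incidenceFinset]
    exact ⟨hg₀, hx⟩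
  have hg₀A : g₀ ∉ A := by
    intro h
    exact hg₀S (Finset.mem_filter.mp h).2
  have hcard : A.card < n := by
    have h1 : A.card < (G.incidenceFinset x).card := by
      apply Finset.card_lt_card
      exact ⟨hAsub, fun hsub => hg₀A (hsub hg₀inc)⟩
    have h2 : (G.incidenceFinset x).card = G.degree x :=
      G.card_incidenceFinset_eq_degree x
    have h3 := G.degree_le_maxDegree x
    omega
  set B : Finset ℕ := A.image c with hB
  have hBcard : B.card < n := lt_of_le_of_lt (Finset.card_image_le) hcard
  have : ∃ a ∈ Finset.range n, a ∉ B := by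
    by_contra hcon
    push_neg at hcon
    have := Finset.card_le_card hcon
    simp only [Finset.card_range] at this
    omega
  obtain ⟨a, ha, haB⟩ := this
  refine ⟨a, Finset.mem_range.mp ha, ?_⟩
  intro g hg hxg hcg
  apply haB
  rw [hB, Finset.mem_image]
  refine ⟨g, ?_, hcg⟩
  rw [hA, Finset.mem_filter, SimpleGraph.mem_incidenceFinset]
  exact ⟨⟨hSE hg, hxg⟩, hg⟩

/-- the transposition of two colors -/
def permc (σ τ a : ℕ) : ℕ := if a = σ then τ else if a = τ then σ else a

lemma permc_inj (σ τ : ℕ) : Function.Injective (permc σ τ) := by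
  intro a b
  unfold permc
  split_ifs <;> omega

lemma permc_lt (σ τ a n : ℕ) (hσ : σ < n) (hτ : τ < n) (ha : a < n) : permc σ τ a < n := by
  unfold permc; split_ifs <;> omega

/-- Kempe swap of colors σ, τ on a reachability-closed vertex set K -/
lemma kempe_swap (S : Set (Sym2 V)) (c : Sym2 V → ℕ) (n : ℕ)
    (hc : EdgeProperOn S c n) (σ τ : ℕ) (hσ : σ < n) (hτ : τ < n)
    (K : Set V)
    (hK : ∀ g ∈ S, (c g = σ ∨ c g = τ) → ∀ x ∈ g, ∀ y ∈ g, x ∈ K → y ∈ K) :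
    ∃ c' : Sym2 V → ℕ, EdgeProperOn S c' n ∧
      (∀ g ∈ S, ∀ x ∈ g, x ∈ K → c' g = permc σ τ (c g)) ∧
      (∀ g ∈ S, ∀ x ∈ g, x ∉ K → c' g = c g) := by
  classical
  set c' : Sym2 V → ℕ := fun g =>
    if g ∈ S ∧ (c g = σ ∨ c g = τ) ∧ (∃ x ∈ g, x ∈ K) then permc σ τ (c g) else c g with hc'
  have hfix : ∀ a, ¬(a = σ ∨ a = τ) → permc σ τ a = a := by
    intro a h; unfold permc; rw [if_neg, if_neg] <;> tauto
  have hloc : ∀ g ∈ S, ∀ y ∈ g, c' g = (if y ∈ K then permc σ τ (c g) else c g) := by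
    intro g hg y hyg
    rw [hc']
    simp only []
    by_cases hcol : c g = σ ∨ c g = τ
    · by_cases hyK : y ∈ K
      · rw [if_pos ⟨hg, hcol, y, hyg, hyK⟩, if_pos hyK]
      · rw [if_neg, if_neg hyK]
        rintro ⟨-, -, x, hxg, hxK⟩
        exact hyK (hK g hg hcol x hxg y hyg hxK)
    · rw [if_neg (by rintro ⟨-, hcol', -⟩; exact hcol hcol')]
      by_cases hyK : y ∈ K
      · rw [if_pos hyK, hfix _ hcol]
      · rw [if_neg hyK]
  refine ⟨c', ⟨?_, ?_⟩, ?_, ?_⟩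
  · intro e he
    rw [hc']
    simp only []
    split_ifs with h
    · exact permc_lt _ _ _ _ hσ hτ (hc.1 e he)
    · exact hc.1 e he
  · rintro e he f hf hef ⟨y, hye, hyf⟩
    rw [hloc e he y hye, hloc f hf y hyf]
    have hne := hc.2 e he f hf hef ⟨y, hye, hyf⟩
    by_cases hyK : y ∈ K
    · rw [if_pos hyK, if_pos hyK]
      intro h
      exact hne (permc_inj σ τ h)
    · rw [if_neg hyK, if_neg hyK]
      exact hne
  · intro g hg x hxg hxK
    rw [hloc g hg x hxg, if_pos hxK]
  · intro g hg x hxg hxK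
    rw [hloc g hg x hxg, if_neg hxK]

/-- In a graph with max degree ≤ 2, two paths from a vertex entered from `prev`
end at the same vertex if both endpoints are leaves. -/
lemma forced_path_rec (H : SimpleGraph V)
    (hdeg : ∀ x y₁ y₂ y₃, H.Adj x y₁ → H.Adj x y₂ → H.Adj x y₃ → y₁ = y₂ ∨ y₁ = y₃ ∨ y₂ = y₃) :
    ∀ (n : ℕ) (x prev b c : V) (p : H.Walk x b) (q : H.Walk x c),
      p.length ≤ n → p.IsPath → q.IsPath → H.Adj prev x →
      prev ∉ p.support → prev ∉ q.support →
      (∀ y₁ y₂, H.Adj b y₁ → H.Adj b y₂ → y₁ = y₂) →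
      (∀ y₁ y₂, H.Adj c y₁ → H.Adj c y₂ → y₁ = y₂) →
      b = c := by
  intro n
  induction n with
  | zero =>
    intro x prev b c p q hlen hp hq hadj hprevp hprevq hb hc
    cases p with
    | nil =>
      cases q with
      | nil => rfl
      | cons hxt q' =>
        rename_i t
        exfalso
        have ht : t ∈ q'.support := q'.start_mem_support
        have : prev = t := hb prev t hadj.symm (by assumption)
        subst this
        apply hprevq
        rw [SimpleGraph.Walk.support_cons]
        exact List.mem_cons_of_mem _ ht
    | cons h p' => simp [SimpleGraph.Walk.length_cons] at hlen
  | succ n ih =>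
    intro x prev b c p q hlen hp hq hadj hprevp hprevq hb hc
    cases p with
    | nil =>
      cases q with
      | nil => rfl
      | cons hxt q' =>
        rename_i t
        exfalso
        have ht : t ∈ q'.support := q'.start_mem_support
        have : prev = t := hb prev t hadj.symm (by assumption)
        subst this
        apply hprevq
        rw [SimpleGraph.Walk.support_cons]
        exact List.mem_cons_of_mem _ ht
    | cons hxt₁ p' =>
      rename_i t₁
      cases q with
      | nil =>
        exfalso
        have ht : t₁ ∈ p'.support := p'.start_mem_support
        have : prev = t₁ := hc prev t₁ hadj.symm hxt₁
        subst this
        apply hprevp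
        rw [SimpleGraph.Walk.support_cons]
        exact List.mem_cons_of_mem _ ht
      | cons hxt₂ q' =>
        rename_i t₂
        have hprevne₁ : prev ≠ t₁ := by
          intro h
          apply hprevp
          rw [SimpleGraph.Walk.support_cons]
          exact List.mem_cons_of_mem _ (h ▸ p'.start_mem_support)
        have hprevne₂ : prev ≠ t₂ := by
          intro h
          apply hprevq
          rw [SimpleGraph.Walk.support_cons]
          exact List.mem_cons_of_mem _ (h ▸ q'.start_mem_support)
        have ht12 : t₁ = t₂ := by
          rcases hdeg x prev t₁ t₂ hadj.symm hxt₁ hxt₂ with h | h | h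
          · exact absurd h hprevne₁
          · exact absurd h hprevne₂
          · exact h
        subst ht12
        have hxp' : x ∉ p'.support := by
          have := hp
          rw [SimpleGraph.Walk.cons_isPath_iff] at this
          exact this.2
        have hxq' : x ∉ q'.support := by
          have := hq
          rw [SimpleGraph.Walk.cons_isPath_iff] at this
          exact this.2
        refine ih t₁ x b c p' q' ?_ ?_ ?_ hxt₁ hxp' hxq' hb hc
        · have : p'.length + 1 ≤ n + 1 := by
            simpa [SimpleGraph.Walk.length_cons] using hlen
          omega
        · exact hp.of_cons
        · exact hq.of_cons

lemma three_leaves (H : SimpleGraph V)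
    (hdeg : ∀ x y₁ y₂ y₃, H.Adj x y₁ → H.Adj x y₂ → H.Adj x y₃ → y₁ = y₂ ∨ y₁ = y₃ ∨ y₂ = y₃)
    (a b c : V)
    (ha : ∀ y₁ y₂, H.Adj a y₁ → H.Adj a y₂ → y₁ = y₂)
    (hb : ∀ y₁ y₂, H.Adj b y₁ → H.Adj b y₂ → y₁ = y₂)
    (hc : ∀ y₁ y₂, H.Adj c y₁ → H.Adj c y₂ → y₁ = y₂)
    (hab : a ≠ b) (hac : a ≠ c) (hbc : b ≠ c)
    (hrab : H.Reachable a b) (hrac : H.Reachable a c) : False := by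
  classical
  obtain ⟨p, hp⟩ : ∃ p : H.Walk a b, p.IsPath := ⟨hrab.some.toPath.1, hrab.some.toPath.2⟩
  obtain ⟨q, hq⟩ : ∃ q : H.Walk a c, q.IsPath := ⟨hrac.some.toPath.1, hrac.some.toPath.2⟩
  cases p with
  | nil => exact hab rfl
  | cons hat₁ p' =>
    rename_i t₁
    cases q with
    | nil => exact hac rfl
    | cons hat₂ q' =>
      rename_i t₂
      have ht12 : t₁ = t₂ := ha t₁ t₂ hat₁ hat₂
      subst ht12
      have hap' : a ∉ p'.support := ((SimpleGraph.Walk.cons_isPath_iff _ _).mp hp).2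
      have haq' : a ∉ q'.support := ((SimpleGraph.Walk.cons_isPath_iff _ _).mp hq).2
      exact hbc (forced_path_rec H hdeg p'.length t₁ a b c p' q' le_rfl
        hp.of_cons hq.of_cons hat₁ hap' haq' hb hc)

/-- helper: recover the Sym2 literal from two distinct members -/
lemma sym2_eq_of_mem {g : Sym2 V} {x y : V} (hx : x ∈ g) (hy : y ∈ g) (hxy : x ≠ y) :
    g = s(x, y) := by
  induction g with
  | _ a b =>
    rw [Sym2.mem_iff] at hx hy
    rcases hx with rfl | rfl <;> rcases hy with rfl | rfl
    · exact absurd rfl hxy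
    · rfl
    · exact Sym2.eq_swap
    · exact absurd rfl hxy.symm

lemma sym2_congr_right {x a b : V} (hxa : x ≠ a) (hxb : x ≠ b) :
    s(x, a) = s(x, b) ↔ a = b := by
  constructor
  · intro h
    rw [Sym2.eq_iff] at h
    rcases h with ⟨-, h⟩ | ⟨h1, h2⟩
    · exact h
    · exact absurd h1 hxb
  · rintro rfl; rfl

/-- The set-up for the Vizing fan argument. -/
structure FanSetup [Fintype V] (G : SimpleGraph V) [DecidableRel G.Adj] : Type where
  S : Set (Sym2 V)
  c : Sym2 V → ℕ
  u : V
  v : V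
  w : V
  k : ℕ
  z : ℕ → V
  hSE : S ⊆ G.edgeSet
  hprop : EdgeProperOn S c G.maxDegree
  he : s(u, v) ∈ G.edgeSet
  heS : s(u, v) ∉ S
  hfE : s(v, w) ∈ G.edgeSet
  hfS : s(v, w) ∉ S
  hef : s(u, v) ≠ s(v, w)
  hz0 : z 0 = v
  hinj : ∀ i ≤ k, ∀ j ≤ k, z i = z j → i = j
  hzmem : ∀ i, 1 ≤ i → i ≤ k → s(u, z i) ∈ S
  hzfan : ∀ i, 1 ≤ i → i ≤ k → ∀ g ∈ S, z (i-1) ∈ g → c g ≠ c s(u, z i)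

namespace FanSetup

variable [Fintype V] {G : SimpleGraph V} [DecidableRel G.Adj] (F : FanSetup G)

/-- missing color -/
def miss (x : V) (a : ℕ) : Prop := a < G.maxDegree ∧ ∀ g ∈ F.S, x ∈ g → F.c g ≠ a

def fedge (l : ℕ) : Sym2 V := s(F.u, F.z l)

lemma huv : F.u ≠ F.v := (G.ne_of_adj F.he)

lemma z_ne_u {i : ℕ} (hi : i ≤ F.k) : F.z i ≠ F.u := by
  rcases Nat.eq_zero_or_pos i with rfl | hpos
  · rw [F.hz0]; exact F.huv.symm
  · have := F.hSE (F.hzmem i hpos hi)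
    exact (G.ne_of_adj this).symm

lemma fedge_zero : F.fedge 0 = s(F.u, F.v) := by rw [fedge, F.hz0]

lemma fedge_mem {l : ℕ} (h1 : 1 ≤ l) (hl : l ≤ F.k) : F.fedge l ∈ F.S := F.hzmem l h1 hl

lemma fedge_not_mem_zero : F.fedge 0 ∉ F.S := by rw [F.fedge_zero]; exact F.heS

lemma fedge_inj {i j : ℕ} (hi : i ≤ F.k) (hj : j ≤ F.k) (h : F.fedge i = F.fedge j) : i = j := by
  apply F.hinj i hi j hj
  rw [fedge, fedge, sym2_congr_right (F.z_ne_u hi).symm (F.z_ne_u hj).symm] at h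
  exact h

lemma u_mem_fedge (l : ℕ) : F.u ∈ F.fedge l := by rw [fedge, Sym2.mem_iff]; left; rfl

lemma z_mem_fedge (l : ℕ) : F.z l ∈ F.fedge l := by rw [fedge, Sym2.mem_iff]; right; rfl

lemma z_not_mem_fedge {m l : ℕ} (hm : m ≤ F.k) (hl : l ≤ F.k) (hlm : l ≠ m) :
    F.z m ∉ F.fedge l := by
  rw [fedge, Sym2.mem_iff]
  rintro (h | h)
  · exact F.z_ne_u hm h
  · exact hlm (F.hinj l hl m hm h.symm)

/-- the color of the l-th fan edge -/
def alpha (l : ℕ) : ℕ := F.c (F.fedge l)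

lemma alpha_lt {l : ℕ} (h1 : 1 ≤ l) (hl : l ≤ F.k) : F.alpha l < G.maxDegree :=
  F.hprop.1 _ (F.fedge_mem h1 hl)

lemma alpha_inj {i j : ℕ} (h1 : 1 ≤ i) (hi : i ≤ F.k) (h1' : 1 ≤ j) (hj : j ≤ F.k)
    (hij : i ≠ j) : F.alpha i ≠ F.alpha j := by
  apply F.hprop.2 _ (F.fedge_mem h1 hi) _ (F.fedge_mem h1' hj)
  · intro h; exact hij (F.fedge_inj hi hj h)
  · exact ⟨F.u, F.u_mem_fedge i, F.u_mem_fedge j⟩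

lemma alpha_missing {l : ℕ} (h1 : 1 ≤ l) (hl : l ≤ F.k) :
    ∀ g ∈ F.S, F.z (l-1) ∈ g → F.c g ≠ F.alpha l := F.hzfan l h1 hl

/-- the shifted edge set -/
def Scol (m : ℕ) : Set (Sym2 V) := insert (s(F.u, F.v)) F.S \ {F.fedge m}

open scoped Classical in
noncomputable def ccol (m : ℕ) : Sym2 V → ℕ := fun g =>
  if h : ∃ l, l < m ∧ g = F.fedge l then F.c (F.fedge (Nat.find h + 1)) else F.c g

lemma Scol_zero : F.Scol 0 = F.S := by
  rw [Scol, F.fedge_zero]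
  ext g
  simp only [Set.mem_diff, Set.mem_insert_iff, Set.mem_singleton_iff]
  constructor
  · rintro ⟨rfl | h, hne⟩
    · exact absurd rfl hne
    · exact h
  · intro h
    exact ⟨Or.inr h, fun hh => F.heS (hh ▸ h)⟩

lemma ccol_zero : F.ccol 0 = F.c := by
  funext g
  simp only [ccol]
  rw [dif_neg]
  rintro ⟨l, hl, -⟩
  omega

lemma ccol_shifted {m l : ℕ} (hm : m ≤ F.k) (hl : l < m) :
    F.ccol m (F.fedge l) = F.alpha (l + 1) := by
  classical
  have hex : ∃ l', l' < m ∧ F.fedge l = F.fedge l' := ⟨l, hl, rfl⟩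
  simp only [ccol]
  rw [dif_pos hex]
  have hspec := Nat.find_spec hex
  have : Nat.find hex = l := by
    apply F.fedge_inj (le_trans (le_of_lt hspec.1) hm) (le_trans (le_of_lt hl) hm)
    exact hspec.2.symm
  rw [this, alpha]

lemma ccol_unshifted {m : ℕ} {g : Sym2 V} (hg : ∀ l, l < m → g ≠ F.fedge l) :
    F.ccol m g = F.c g := by
  classical
  simp only [ccol]
  rw [dif_neg]
  rintro ⟨l, hl, hgl⟩
  exact hg l hl hgl

lemma mem_S_of_not_shifted {m : ℕ} {g : Sym2 V} (hg : g ∈ F.Scol m)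
    (hsh : ∀ l, l < m → g ≠ F.fedge l) : g ∈ F.S ∧ g ≠ F.fedge m := by
  obtain ⟨hg1, hg2⟩ := hg
  rcases hg1 with h | h
  · exfalso
    rcases Nat.eq_zero_or_pos m with rfl | hpos
    · exact hg2 (Set.mem_singleton_iff.mpr (by rw [h, F.fedge_zero]))
    · exact hsh 0 hpos (by rw [h, F.fedge_zero])
  · exact ⟨h, hg2⟩

lemma fedge_mem_insert {m : ℕ} (hm : m ≤ F.k) : F.fedge m ∈ insert (s(F.u, F.v)) F.S := by
  rcases Nat.eq_zero_or_pos m with rfl | hpos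
  · left; exact F.fedge_zero
  · right; exact F.fedge_mem hpos hm

lemma Scol_sub {m : ℕ} (hm : m ≤ F.k) : F.Scol m ⊆ G.edgeSet := by
  rintro g ⟨hg, -⟩
  rcases hg with rfl | hg
  · exact F.he
  · exact F.hSE hg

lemma Scol_ncard {m : ℕ} (hm : m ≤ F.k) : (F.Scol m).ncard = F.S.ncard := by
  classical
  have h1 : (insert (s(F.u, F.v)) F.S).ncard = F.S.ncard + 1 :=
    Set.ncard_insert_of_notMem F.heS (Set.toFinite _)
  have h2 : (F.Scol m).ncard = (insert (s(F.u, F.v)) F.S).ncard - 1 := by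
    rw [Scol, Set.ncard_diff_singleton_of_mem (F.fedge_mem_insert hm)]
  omega
end FanSetup


section Fan
variable [Fintype V] {G : SimpleGraph V} [DecidableRel G.Adj] (F : FanSetup G)
namespace FanSetup

lemma ccol_lt {m : ℕ} (hm : m ≤ F.k) {g : Sym2 V} (hg : g ∈ F.Scol m) :
    F.ccol m g < G.maxDegree := by
  classical
  by_cases hsh : ∃ l, l < m ∧ g = F.fedge l
  · obtain ⟨l, hl, rfl⟩ := hsh
    rw [F.ccol_shifted hm hl]
    exact F.alpha_lt (by omega) (by omega)
  · push_neg at hsh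
    rw [F.ccol_unshifted hsh]
    exact F.hprop.1 _ (F.mem_S_of_not_shifted hg hsh).1

lemma ccol_ne_of_shifted {m i : ℕ} (hm : m ≤ F.k) (hi : i < m) {h : Sym2 V}
    (hhS : h ∈ F.Scol m) (hsh : ∀ l, l < m → h ≠ F.fedge l)
    (hy : ∃ y, y ∈ F.fedge i ∧ y ∈ h) :
    F.c h ≠ F.alpha (i+1) := by
  obtain ⟨hhS', hhm⟩ := F.mem_S_of_not_shifted hhS hsh
  obtain ⟨y, hy1, hy2⟩ := hy
  rw [fedge, Sym2.mem_iff] at hy1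
  rcases hy1 with rfl | rfl
  · have hiS : F.fedge (i+1) ∈ F.S := F.fedge_mem (by omega) (by omega)
    have hne : h ≠ F.fedge (i+1) := by
      intro hEq
      rcases Nat.lt_or_ge (i+1) m with hlt | hge
      · exact hsh (i+1) hlt hEq
      · have him : i + 1 = m := by omega
        exact hhm (him ▸ hEq)
    exact F.hprop.2 h hhS' _ hiS hne ⟨F.u, hy2, F.u_mem_fedge (i+1)⟩
  · have := F.alpha_missing (l := i+1) (by omega) (by omega) h hhS'
    simp only [Nat.add_sub_cancel] at this
    exact this hy2

lemma shift_proper {m : ℕ} (hm : m ≤ F.k) :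
    EdgeProperOn (F.Scol m) (F.ccol m) G.maxDegree := by
  classical
  constructor
  · intro g hg; exact F.ccol_lt hm hg
  · intro g hg h hh hgh hshare
    by_cases hgs : ∃ l, l < m ∧ g = F.fedge l
    · obtain ⟨i, him, rfl⟩ := hgs
      by_cases hhs : ∃ l, l < m ∧ h = F.fedge l
      · obtain ⟨jj, hjm, rfl⟩ := hhs
        rw [F.ccol_shifted hm him, F.ccol_shifted hm hjm]
        refine F.alpha_inj (by omega) (by omega) (by omega) (by omega) ?_
        intro hEq
        apply hgh
        rw [show i = jj from by omega]
      · push_neg at hhs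
        rw [F.ccol_shifted hm him, F.ccol_unshifted hhs]
        exact (F.ccol_ne_of_shifted hm him hh hhs hshare).symm
    · push_neg at hgs
      by_cases hhs : ∃ l, l < m ∧ h = F.fedge l
      · obtain ⟨jj, hjm, rfl⟩ := hhs
        rw [F.ccol_shifted hm hjm, F.ccol_unshifted hgs]
        obtain ⟨y, hy1, hy2⟩ := hshare
        exact F.ccol_ne_of_shifted hm hjm hg hgs ⟨y, hy2, hy1⟩
      · push_neg at hhs
        rw [F.ccol_unshifted hgs, F.ccol_unshifted hhs]
        exact F.hprop.2 g (F.mem_S_of_not_shifted hg hgs).1 h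
          (F.mem_S_of_not_shifted hh hhs).1 hgh hshare

end FanSetup
end Fan

section Fan2
variable [Fintype V] {G : SimpleGraph V} [DecidableRel G.Adj] (F : FanSetup G)
namespace FanSetup

lemma win_card (hmax : ∀ T, T ⊆ G.edgeSet → EdgeColorableOn T G.maxDegree →
      auxTheta G T ≤ auxTheta G F.S)
    {T : Set (Sym2 V)} (hTE : T ⊆ G.edgeSet) (hTc : EdgeColorableOn T G.maxDegree)
    (hcard : T.ncard = F.S.ncard + 1) : False := by
  have h1 := hmax T hTE hTc
  have h2 := auxTheta_lt_of_card G F.S T (by omega)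
  omega

lemma ccol_avoid {m : ℕ} (hm : m ≤ F.k) {a : ℕ} (hu : F.miss F.u a)
    (hz : F.miss (F.z m) a) :
    ∀ h ∈ F.Scol m, (∃ y, y ∈ F.fedge m ∧ y ∈ h) → F.ccol m h ≠ a := by
  classical
  rintro h hh ⟨y, hy1, hy2⟩
  rw [fedge, Sym2.mem_iff] at hy1
  rcases hy1 with rfl | rfl
  · by_cases hsh : ∃ l, l < m ∧ h = F.fedge l
    · obtain ⟨l, hl, rfl⟩ := hsh
      rw [F.ccol_shifted hm hl]
      exact hu.2 _ (F.fedge_mem (by omega) (by omega)) (F.u_mem_fedge (l+1))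
    · push_neg at hsh
      rw [F.ccol_unshifted hsh]
      exact hu.2 h (F.mem_S_of_not_shifted hh hsh).1 hy2
  · have hsh : ∀ l, l < m → h ≠ F.fedge l := by
      intro l hl hEq
      exact F.z_not_mem_fedge hm (by omega) (by omega) (hEq ▸ hy2)
    rw [F.ccol_unshifted hsh]
    exact hz.2 h (F.mem_S_of_not_shifted hh hsh).1 hy2

lemma no_common (hmax : ∀ T, T ⊆ G.edgeSet → EdgeColorableOn T G.maxDegree →
      auxTheta G T ≤ auxTheta G F.S)
    {m : ℕ} (hm : m ≤ F.k) {a : ℕ} (hu : F.miss F.u a) (hz : F.miss (F.z m) a) : False := by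
  classical
  set T : Set (Sym2 V) := insert (F.fedge m) (F.Scol m) with hT
  have hnm : F.fedge m ∉ F.Scol m := by
    intro hmem
    exact hmem.2 rfl
  have hTE : T ⊆ G.edgeSet := by
    rintro g (rfl | hg)
    · rcases Nat.eq_zero_or_pos m with rfl | hpos
      · rw [F.fedge_zero]; exact F.he
      · exact F.hSE (F.fedge_mem hpos hm)
    · exact F.Scol_sub hm hg
  have hTcard : T.ncard = F.S.ncard + 1 := by
    rw [hT, Set.ncard_insert_of_notMem hnm (Set.toFinite _), F.Scol_ncard hm]
  have havoid := F.ccol_avoid hm hu hz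
  refine F.win_card hmax hTE ⟨fun g => if g = F.fedge m then a else F.ccol m g, ?_, ?_⟩ hTcard
  · rintro g (rfl | hg)
    · beta_reduce
      rw [if_pos rfl]; exact hu.1
    · beta_reduce
      rw [if_neg (by rintro rfl; exact hnm hg)]
      exact F.ccol_lt hm hg
  · rintro g hg h hh hgh hshare
    rcases hg with rfl | hg <;> rcases hh with rfl | hh
    · exact absurd rfl hgh
    · beta_reduce
      rw [if_pos rfl, if_neg (by rintro rfl; exact hnm hh)]
      exact fun hEq => (havoid h hh hshare) hEq.symm
    · beta_reduce
      rw [if_pos rfl, if_neg (by rintro rfl; exact hnm hg)]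
      obtain ⟨y, hy1, hy2⟩ := hshare
      exact fun hEq => (havoid g hg ⟨y, hy2, hy1⟩) hEq
    · beta_reduce
      rw [if_neg (by rintro rfl; exact hnm hg), if_neg (by rintro rfl; exact hnm hh)]
      exact (F.shift_proper hm).2 g hg h hh hgh hshare

lemma z_covered (hmax : ∀ T, T ⊆ G.edgeSet → EdgeColorableOn T G.maxDegree →
      auxTheta G T ≤ auxTheta G F.S)
    {m : ℕ} (h1 : 1 ≤ m) (hm : m ≤ F.k) :
    ∃ g, g ∈ G.edgeSet ∧ g ∉ F.S ∧ F.z m ∈ g := by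
  classical
  by_contra hcov
  push_neg at hcov
  have hfm : F.fedge m ∈ G.edgeSet := F.hSE (F.fedge_mem h1 hm)
  have hfmS : F.fedge m ∉ F.Scol m := fun hmem => hmem.2 rfl
  have hsub : {x : V | ∃ g, g ∈ G.edgeSet ∧ g ∉ F.S ∧ x ∈ g} ⊂
      {x : V | ∃ g, g ∈ G.edgeSet ∧ g ∉ F.Scol m ∧ x ∈ g} := by
    constructor
    · rintro x ⟨g, hgE, hgS, hxg⟩
      by_cases hge : g = s(F.u, F.v)
      · subst hge
        rw [Sym2.mem_iff] at hxg
        rcases hxg with rfl | rfl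
        · exact ⟨F.fedge m, hfm, hfmS, F.u_mem_fedge m⟩
        · refine ⟨s(F.v, F.w), F.hfE, ?_, by rw [Sym2.mem_iff]; left; rfl⟩
          rintro ⟨(hh | hh), -⟩
          · exact F.hef hh.symm
          · exact F.hfS hh
      · refine ⟨g, hgE, ?_, hxg⟩
        rintro ⟨(hh | hh), -⟩
        · exact hge hh
        · exact hgS hh
    · intro hsup
      have hzm : F.z m ∈ {x : V | ∃ g, g ∈ G.edgeSet ∧ g ∉ F.Scol m ∧ x ∈ g} :=
        ⟨F.fedge m, hfm, hfmS, F.z_mem_fedge m⟩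
      obtain ⟨g, hgE, hgS, hzg⟩ := hsup hzm
      exact (hcov g hgE hgS) hzg
  have hpsi : auxPsi G F.S < auxPsi G (F.Scol m) :=
    Set.ncard_lt_ncard hsub (Set.toFinite _)
  have htheta := auxTheta_lt_of_psi G F.S (F.Scol m) (F.Scol_ncard hm).symm hpsi
  have := hmax (F.Scol m) (F.Scol_sub hm) ⟨F.ccol m, F.shift_proper hm⟩
  omega

lemma miss_nonempty_u : ∃ a, F.miss F.u a := by
  obtain ⟨a, h1, h2⟩ := exists_missing G F.S F.hSE F.c F.hprop F.u s(F.u, F.v) F.he F.heS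
    (by rw [Sym2.mem_iff]; left; rfl)
  exact ⟨a, h1, h2⟩

lemma miss_nonempty_z (hmax : ∀ T, T ⊆ G.edgeSet → EdgeColorableOn T G.maxDegree →
      auxTheta G T ≤ auxTheta G F.S) {m : ℕ} (hm : m ≤ F.k) : ∃ a, F.miss (F.z m) a := by
  rcases Nat.eq_zero_or_pos m with rfl | hpos
  · obtain ⟨a, h1, h2⟩ := exists_missing G F.S F.hSE F.c F.hprop (F.z 0) s(F.v, F.w)
      F.hfE F.hfS (by rw [F.hz0, Sym2.mem_iff]; left; rfl)
    exact ⟨a, h1, h2⟩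
  · obtain ⟨g, hgE, hgS, hzg⟩ := F.z_covered hmax hpos hm
    obtain ⟨a, h1, h2⟩ := exists_missing G F.S F.hSE F.c F.hprop (F.z m) g hgE hgS hzg
    exact ⟨a, h1, h2⟩

end FanSetup
end Fan2

lemma permc_eq_left {σ τ a : ℕ} (hστ : σ ≠ τ) (h : permc σ τ a = σ) : a = τ := by
  unfold permc at h
  split_ifs at h <;> omega

/-- the graph of edges colored σ or τ -/
def HGraph (S' : Set (Sym2 V)) (c' : Sym2 V → ℕ) (σ τ : ℕ) : SimpleGraph V where
  Adj x y := x ≠ y ∧ s(x, y) ∈ S' ∧ (c' s(x, y) = σ ∨ c' s(x, y) = τ)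
  symm := ⟨by
    rintro x y ⟨h1, h2, h3⟩
    refine ⟨h1.symm, ?_, ?_⟩ <;> rw [Sym2.eq_swap] <;> assumption⟩
  loopless := ⟨fun x h => h.1 rfl⟩

lemma HGraph_adj {S' : Set (Sym2 V)} {c' : Sym2 V → ℕ} {σ τ : ℕ} {x y : V} :
    (HGraph S' c' σ τ).Adj x y ↔
      x ≠ y ∧ s(x, y) ∈ S' ∧ (c' s(x, y) = σ ∨ c' s(x, y) = τ) := Iff.rfl

lemma HGraph_deg2 {S' : Set (Sym2 V)} {c' : Sym2 V → ℕ} {σ τ n : ℕ}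
    (hprop' : EdgeProperOn S' c' n) :
    ∀ x y₁ y₂ y₃, (HGraph S' c' σ τ).Adj x y₁ → (HGraph S' c' σ τ).Adj x y₂ →
      (HGraph S' c' σ τ).Adj x y₃ → y₁ = y₂ ∨ y₁ = y₃ ∨ y₂ = y₃ := by
  intro x y₁ y₂ y₃ h1 h2 h3
  by_contra hcon
  push_neg at hcon
  obtain ⟨h12, h13, h23⟩ := hcon
  obtain ⟨hne1, hm1, hc1⟩ := h1
  obtain ⟨hne2, hm2, hc2⟩ := h2
  obtain ⟨hne3, hm3, hc3⟩ := h3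
  have e12 : s(x, y₁) ≠ s(x, y₂) := fun h => h12 ((sym2_congr_right hne1 hne2).mp h)
  have e13 : s(x, y₁) ≠ s(x, y₃) := fun h => h13 ((sym2_congr_right hne1 hne3).mp h)
  have e23 : s(x, y₂) ≠ s(x, y₃) := fun h => h23 ((sym2_congr_right hne2 hne3).mp h)
  have hx1 : x ∈ s(x, y₁) := by rw [Sym2.mem_iff]; left; rfl
  have hx2 : x ∈ s(x, y₂) := by rw [Sym2.mem_iff]; left; rfl
  have hx3 : x ∈ s(x, y₃) := by rw [Sym2.mem_iff]; left; rfl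
  have d12 := hprop'.2 _ hm1 _ hm2 e12 ⟨x, hx1, hx2⟩
  have d13 := hprop'.2 _ hm1 _ hm3 e13 ⟨x, hx1, hx3⟩
  have d23 := hprop'.2 _ hm2 _ hm3 e23 ⟨x, hx2, hx3⟩
  omega

lemma HGraph_leaf_sigma {S' : Set (Sym2 V)} {c' : Sym2 V → ℕ} {σ τ n : ℕ}
    (hprop' : EdgeProperOn S' c' n) (x : V)
    (hmiss : ∀ g ∈ S', x ∈ g → c' g ≠ τ) :
    ∀ y₁ y₂, (HGraph S' c' σ τ).Adj x y₁ → (HGraph S' c' σ τ).Adj x y₂ → y₁ = y₂ := by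
  intro y₁ y₂ h1 h2
  obtain ⟨hne1, hm1, hc1⟩ := h1
  obtain ⟨hne2, hm2, hc2⟩ := h2
  have hx1 : x ∈ s(x, y₁) := by rw [Sym2.mem_iff]; left; rfl
  have hx2 : x ∈ s(x, y₂) := by rw [Sym2.mem_iff]; left; rfl
  by_contra h12
  have e12 : s(x, y₁) ≠ s(x, y₂) := fun h => h12 ((sym2_congr_right hne1 hne2).mp h)
  have d12 := hprop'.2 _ hm1 _ hm2 e12 ⟨x, hx1, hx2⟩
  have m1 := hmiss _ hm1 hx1
  have m2 := hmiss _ hm2 hx2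
  omega

lemma swap_and_add [Fintype V] (G : SimpleGraph V) [DecidableRel G.Adj]
    (S' : Set (Sym2 V)) (c' : Sym2 V → ℕ)
    (hS'E : S' ⊆ G.edgeSet) (hprop' : EdgeProperOn S' c' G.maxDegree)
    (σ τ : ℕ) (hσ : σ < G.maxDegree) (hτlt : τ < G.maxDegree) (hστ : σ ≠ τ)
    (x₁ x₂ : V) (hg₀E : s(x₁, x₂) ∈ G.edgeSet) (hg₀S : s(x₁, x₂) ∉ S')
    (hreach : ¬ (HGraph S' c' σ τ).Reachable x₁ x₂)
    (hx₁ : ∀ g ∈ S', x₁ ∈ g → c' g ≠ τ)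
    (hx₂ : ∀ g ∈ S', x₂ ∈ g → c' g ≠ σ) :
    ∃ T, T ⊆ G.edgeSet ∧ EdgeColorableOn T G.maxDegree ∧ T.ncard = S'.ncard + 1 := by
  classical
  set H := HGraph S' c' σ τ with hH
  set K : Set V := {t | H.Reachable x₁ t} with hK
  have hx12 : x₁ ≠ x₂ := G.ne_of_adj hg₀E
  have hclosed : ∀ g ∈ S', (c' g = σ ∨ c' g = τ) → ∀ x ∈ g, ∀ y ∈ g, x ∈ K → y ∈ K := by
    intro g hg hcol x hx y hy hxK
    by_cases hxy : x = y
    · exact hxy ▸ hxK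
    · have hadj : H.Adj x y := by
        rw [hH, HGraph_adj]
        exact ⟨hxy, by rwa [← sym2_eq_of_mem hx hy hxy], by rwa [← sym2_eq_of_mem hx hy hxy]⟩
      exact Set.mem_setOf_eq ▸ (Set.mem_setOf_eq ▸ hxK).trans hadj.reachable
  obtain ⟨c'', hprop'', hin, hout⟩ :=
    kempe_swap S' c' G.maxDegree hprop' σ τ hσ hτlt K hclosed
  have hx₁K : x₁ ∈ K := by rw [hK]; exact Set.mem_setOf_eq ▸ SimpleGraph.Reachable.refl x₁
  have hx₂K : x₂ ∉ K := hreach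
  have key : ∀ h' ∈ S', (∃ y, y ∈ s(x₁, x₂) ∧ y ∈ h') → c'' h' ≠ σ := by
    rintro h' hh' ⟨y, hy1, hy2⟩
    rw [Sym2.mem_iff] at hy1
    rcases hy1 with rfl | rfl
    · rw [hin h' hh' _ hy2 hx₁K]
      intro hEq
      exact hx₁ h' hh' hy2 (permc_eq_left hστ hEq)
    · rw [hout h' hh' _ hy2 hx₂K]
      exact hx₂ h' hh' hy2
  refine ⟨insert s(x₁, x₂) S', ?_, ⟨fun g => if g = s(x₁, x₂) then σ else c'' g, ?_, ?_⟩, ?_⟩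
  · rintro g (rfl | hg)
    · exact hg₀E
    · exact hS'E hg
  · rintro g (rfl | hg)
    · beta_reduce; rw [if_pos rfl]; exact hσ
    · beta_reduce; rw [if_neg (by rintro rfl; exact hg₀S hg)]; exact hprop''.1 g hg
  · rintro g hg h hh hgh hshare
    rcases hg with rfl | hg <;> rcases hh with rfl | hh
    · exact absurd rfl hgh
    · beta_reduce
      rw [if_pos rfl, if_neg (by rintro rfl; exact hg₀S hh)]
      exact fun hEq => key h hh hshare hEq.symm
    · beta_reduce
      rw [if_pos rfl, if_neg (by rintro rfl; exact hg₀S hg)]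
      obtain ⟨y, hy1, hy2⟩ := hshare
      exact fun hEq => key g hg ⟨y, hy2, hy1⟩ hEq
    · beta_reduce
      rw [if_neg (by rintro rfl; exact hg₀S hg), if_neg (by rintro rfl; exact hg₀S hh)]
      exact hprop''.2 g hg h hh hgh hshare
  · rw [Set.ncard_insert_of_notMem hg₀S (Set.toFinite _)]

section Fan3
variable [Fintype V] {G : SimpleGraph V} [DecidableRel G.Adj] (F : FanSetup G)
namespace FanSetup

lemma hg_edge_iff {σ τ jj m : ℕ}
    (hσu : ∀ g ∈ F.S, F.u ∈ g → F.c g ≠ σ)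
    (hjj1 : 1 ≤ jj) (hjjk : jj ≤ F.k) (hτ : τ = F.alpha jj)
    (hm : m ≤ F.k) (hmj : m < jj) :
    ∀ g, (g ∈ F.Scol m ∧ (F.ccol m g = σ ∨ F.ccol m g = τ)) ↔
      (g ∈ F.S ∧ (F.c g = σ ∨ F.c g = τ)) := by
  intro g
  have halpha_ne : ∀ l, 1 ≤ l → l ≤ F.k → l ≠ jj → F.alpha l ≠ τ := by
    intro l h1 hl hne
    rw [hτ]
    exact F.alpha_inj h1 hl hjj1 hjjk hne
  have halpha_nσ : ∀ l, 1 ≤ l → l ≤ F.k → F.alpha l ≠ σ := by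
    intro l h1 hl
    exact hσu _ (F.fedge_mem h1 hl) (F.u_mem_fedge l)
  constructor
  · rintro ⟨hmem, hcol⟩
    by_cases hsh : ∃ l, l < m ∧ g = F.fedge l
    · exfalso
      obtain ⟨l, hl, rfl⟩ := hsh
      rw [F.ccol_shifted hm hl] at hcol
      rcases hcol with h | h
      · exact halpha_nσ (l+1) (by omega) (by omega) h
      · exact halpha_ne (l+1) (by omega) (by omega) (by omega) h
    · push_neg at hsh
      rw [F.ccol_unshifted hsh] at hcol
      exact ⟨(F.mem_S_of_not_shifted hmem hsh).1, hcol⟩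
  · rintro ⟨hmem, hcol⟩
    have hsh : ∀ l, l < m → g ≠ F.fedge l := by
      intro l hl hEq
      rcases Nat.eq_zero_or_pos l with rfl | hpos
      · exact F.fedge_not_mem_zero (hEq ▸ hmem)
      · rw [hEq] at hcol
        rcases hcol with h | h
        · exact halpha_nσ l hpos (by omega) h
        · exact halpha_ne l hpos (by omega) (by omega) h
    have hnm : g ≠ F.fedge m := by
      intro hEq
      rcases Nat.eq_zero_or_pos m with rfl | hpos
      · exact F.fedge_not_mem_zero (hEq ▸ hmem)
      · rw [hEq] at hcol
        rcases hcol with h | h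
        · exact halpha_nσ m hpos hm h
        · exact halpha_ne m hpos hm (by omega) h
    rw [F.ccol_unshifted hsh]
    exact ⟨⟨Or.inr hmem, hnm⟩, hcol⟩

lemma hg_eq {σ τ jj m : ℕ}
    (hσu : ∀ g ∈ F.S, F.u ∈ g → F.c g ≠ σ)
    (hjj1 : 1 ≤ jj) (hjjk : jj ≤ F.k) (hτ : τ = F.alpha jj)
    (hm : m ≤ F.k) (hmj : m < jj) :
    HGraph (F.Scol m) (F.ccol m) σ τ = HGraph F.S F.c σ τ := by
  ext x y
  rw [HGraph_adj, HGraph_adj]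
  constructor
  · rintro ⟨h1, h2, h3⟩
    obtain ⟨h2', h3'⟩ := (F.hg_edge_iff hσu hjj1 hjjk hτ hm hmj s(x,y)).mp ⟨h2, h3⟩
    exact ⟨h1, h2', h3'⟩
  · rintro ⟨h1, h2, h3⟩
    obtain ⟨h2', h3'⟩ := (F.hg_edge_iff hσu hjj1 hjjk hτ hm hmj s(x,y)).mpr ⟨h2, h3⟩
    exact ⟨h1, h2', h3'⟩

lemma hgk_adj {σ τ jj : ℕ}
    (hσu : ∀ g ∈ F.S, F.u ∈ g → F.c g ≠ σ)
    (hjj1 : 1 ≤ jj) (hjjk : jj ≤ F.k) (hτ : τ = F.alpha jj) :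
    ∀ x y, (HGraph (F.Scol F.k) (F.ccol F.k) σ τ).Adj x y →
      (HGraph F.S F.c σ τ).Adj x y ∨ s(x, y) = F.fedge (jj - 1) := by
  rintro x y ⟨hne, hmem, hcol⟩
  by_cases hsh : ∃ l, l < F.k ∧ s(x, y) = F.fedge l
  · obtain ⟨l, hl, hEq⟩ := hsh
    rw [hEq, F.ccol_shifted le_rfl hl] at hcol
    rcases hcol with h | h
    · exact absurd h (hσu _ (F.fedge_mem (by omega) (by omega)) (F.u_mem_fedge (l+1)))
    · right
      have : l + 1 = jj := by
        by_contra hc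
        exact F.alpha_inj (by omega) (by omega) hjj1 hjjk hc (h.trans hτ)
      rw [hEq]
      congr
      omega
  · push_neg at hsh
    rw [F.ccol_unshifted hsh] at hcol
    exact Or.inl ⟨hne, (F.mem_S_of_not_shifted hmem hsh).1, hcol⟩

lemma reach_transfer {σ τ jj : ℕ}
    (hσu : ∀ g ∈ F.S, F.u ∈ g → F.c g ≠ σ)
    (hjj1 : 1 ≤ jj) (hjjk : jj < F.k) (hτ : τ = F.alpha jj)
    (hnr1 : ¬ (HGraph F.S F.c σ τ).Reachable (F.z F.k) F.u)
    (hnr2 : ¬ (HGraph F.S F.c σ τ).Reachable (F.z F.k) (F.z (jj - 1))) :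
    ¬ (HGraph (F.Scol F.k) (F.ccol F.k) σ τ).Reachable (F.z F.k) F.u := by
  intro hr
  have claim : ∀ (a x : V) (p : (HGraph (F.Scol F.k) (F.ccol F.k) σ τ).Walk a x),
      (a ≠ F.u ∧ a ≠ F.z (jj - 1) ∧ (HGraph F.S F.c σ τ).Reachable (F.z F.k) a) →
      (x ≠ F.u ∧ x ≠ F.z (jj - 1) ∧ (HGraph F.S F.c σ τ).Reachable (F.z F.k) x) := by
    intro a x p
    induction p with
    | nil => exact fun h => h
    | cons hadj q ih =>
      rename_i a' b' x'
      intro hgood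
      apply ih
      rcases F.hgk_adj hσu hjj1 (le_of_lt hjjk) hτ _ _ hadj with h | h
      · refine ⟨?_, ?_, hgood.2.2.trans h.reachable⟩
        · rintro rfl
          exact hnr1 (hgood.2.2.trans h.reachable)
        · rintro rfl
          exact hnr2 (hgood.2.2.trans h.reachable)
      · exfalso
        have ha : a' ∈ s(a', b') := by rw [Sym2.mem_iff]; left; rfl
        rw [h, fedge, Sym2.mem_iff] at ha
        rcases ha with h' | h'
        · exact hgood.1 h'
        · exact hgood.2.1 h'
  obtain ⟨p⟩ := hr
  have hbase : F.z F.k ≠ F.u ∧ F.z F.k ≠ F.z (jj - 1) ∧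
      (HGraph F.S F.c σ τ).Reachable (F.z F.k) (F.z F.k) :=
    ⟨F.z_ne_u le_rfl, fun h => by
        have := F.hinj F.k le_rfl (jj - 1) (by omega) h
        omega,
      SimpleGraph.Reachable.refl _⟩
  exact (claim _ _ p hbase).1 rfl

end FanSetup
end Fan3

section Fan4
variable [Fintype V] {G : SimpleGraph V} [DecidableRel G.Adj] (F : FanSetup G)
namespace FanSetup

lemma ccol_at_u {m a : ℕ} (hm : m ≤ F.k) (hu : ∀ g ∈ F.S, F.u ∈ g → F.c g ≠ a) :
    ∀ h ∈ F.Scol m, F.u ∈ h → F.ccol m h ≠ a := by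
  classical
  intro h hh hy2
  by_cases hsh : ∃ l, l < m ∧ h = F.fedge l
  · obtain ⟨l, hl, rfl⟩ := hsh
    rw [F.ccol_shifted hm hl]
    exact hu _ (F.fedge_mem (by omega) (by omega)) (F.u_mem_fedge (l+1))
  · push_neg at hsh
    rw [F.ccol_unshifted hsh]
    exact hu h (F.mem_S_of_not_shifted hh hsh).1 hy2

lemma ccol_at_z {m a : ℕ} (hm : m ≤ F.k) (hz : ∀ g ∈ F.S, F.z m ∈ g → F.c g ≠ a) :
    ∀ h ∈ F.Scol m, F.z m ∈ h → F.ccol m h ≠ a := by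
  classical
  intro h hh hy2
  have hsh : ∀ l, l < m → h ≠ F.fedge l := by
    intro l hl hEq
    exact F.z_not_mem_fedge hm (by omega) (by omega) (hEq ▸ hy2)
  rw [F.ccol_unshifted hsh]
  exact hz h (F.mem_S_of_not_shifted hh hsh).1 hy2

lemma fedge_not_mem_Scol (m : ℕ) : F.fedge m ∉ F.Scol m := fun hmem => hmem.2 rfl

lemma fedge_mem_edgeSet {m : ℕ} (hm : m ≤ F.k) : F.fedge m ∈ G.edgeSet := by
  rcases Nat.eq_zero_or_pos m with rfl | hpos
  · rw [F.fedge_zero]; exact F.he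
  · exact F.hSE (F.fedge_mem hpos hm)

/-- the endgame: a fan with a repeated color leads to a larger colorable subgraph
or a contradiction -/
lemma endgame (hmax : ∀ T, T ⊆ G.edgeSet → EdgeColorableOn T G.maxDegree →
      auxTheta G T ≤ auxTheta G F.S)
    {σ τ jj : ℕ} (hσ : F.miss F.u σ) (hτk : F.miss (F.z F.k) τ)
    (hjj1 : 1 ≤ jj) (hjjk : jj < F.k) (hτ : τ = F.alpha jj) : False := by
  classical
  have hστ : σ ≠ τ := by
    rintro rfl
    exact hσ.2 _ (F.fedge_mem hjj1 (by omega)) (F.u_mem_fedge jj) hτ.symm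
  have hτjm : F.miss (F.z (jj - 1)) τ := by
    refine ⟨hτk.1, ?_⟩
    rw [hτ]
    exact F.hzfan jj hjj1 (by omega)
  set H := HGraph F.S F.c σ τ with hH
  have hdeg2 := HGraph_deg2 (σ := σ) (τ := τ) F.hprop
  have leaf_u : ∀ y₁ y₂, H.Adj F.u y₁ → H.Adj F.u y₂ → y₁ = y₂ := by
    intro y₁ y₂ h1 h2
    obtain ⟨hne1, hm1, hc1⟩ := h1
    obtain ⟨hne2, hm2, hc2⟩ := h2
    have hx1 : F.u ∈ s(F.u, y₁) := by rw [Sym2.mem_iff]; left; rfl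
    have hx2 : F.u ∈ s(F.u, y₂) := by rw [Sym2.mem_iff]; left; rfl
    by_contra h12
    have e12 : s(F.u, y₁) ≠ s(F.u, y₂) := fun h => h12 ((sym2_congr_right hne1 hne2).mp h)
    have d12 := F.hprop.2 _ hm1 _ hm2 e12 ⟨F.u, hx1, hx2⟩
    have m1 := hσ.2 _ hm1 hx1
    have m2 := hσ.2 _ hm2 hx2
    omega
  have leaf_jm : ∀ y₁ y₂, H.Adj (F.z (jj-1)) y₁ → H.Adj (F.z (jj-1)) y₂ → y₁ = y₂ :=
    HGraph_leaf_sigma F.hprop _ hτjm.2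
  have leaf_k : ∀ y₁ y₂, H.Adj (F.z F.k) y₁ → H.Adj (F.z F.k) y₂ → y₁ = y₂ :=
    HGraph_leaf_sigma F.hprop _ hτk.2
  by_cases hA : H.Reachable (F.z (jj-1)) F.u
  · by_cases hB : H.Reachable (F.z (jj-1)) (F.z F.k)
    · -- three leaves in one component
      refine three_leaves H hdeg2 (F.z (jj-1)) F.u (F.z F.k) leaf_jm leaf_u leaf_k
        (F.z_ne_u (by omega)) ?_ ?_ hA hB
      · intro h
        have := F.hinj (jj-1) (by omega) F.k le_rfl h
        omega
      · exact fun h => (F.z_ne_u le_rfl) h.symm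
    · -- swap the component of z k in the k-shifted coloring
      have hnr1 : ¬ H.Reachable (F.z F.k) F.u := fun h => hB (hA.trans h.symm)
      have hnr2 : ¬ H.Reachable (F.z F.k) (F.z (jj-1)) := fun h => hB h.symm
      have htrans := F.reach_transfer hσ.2 hjj1 hjjk hτ hnr1 hnr2
      have hkk1 : 1 ≤ F.k := by omega
      have hg₀E : s(F.z F.k, F.u) ∈ G.edgeSet := by
        rw [Sym2.eq_swap]
        exact F.fedge_mem_edgeSet le_rfl
      have hg₀S : s(F.z F.k, F.u) ∉ F.Scol F.k := by
        rw [Sym2.eq_swap]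
        exact F.fedge_not_mem_Scol F.k
      have hx₁ : ∀ g ∈ F.Scol F.k, F.z F.k ∈ g → F.ccol F.k g ≠ τ :=
        F.ccol_at_z le_rfl hτk.2
      have hx₂ : ∀ g ∈ F.Scol F.k, F.u ∈ g → F.ccol F.k g ≠ σ :=
        F.ccol_at_u le_rfl hσ.2
      obtain ⟨T, hT1, hT2, hT3⟩ := swap_and_add G (F.Scol F.k) (F.ccol F.k)
        (F.Scol_sub le_rfl) (F.shift_proper le_rfl) σ τ hσ.1 hτk.1 hστ
        (F.z F.k) F.u hg₀E hg₀S htrans hx₁ hx₂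
      exact F.win_card hmax hT1 hT2 (by rw [hT3, F.Scol_ncard le_rfl])
  · -- swap the component of z (jj-1) in the (jj-1)-shifted coloring
    have hgeq := F.hg_eq hσ.2 hjj1 (by omega) hτ (m := jj - 1) (by omega) (by omega)
    have htrans : ¬ (HGraph (F.Scol (jj-1)) (F.ccol (jj-1)) σ τ).Reachable
        (F.z (jj-1)) F.u := by
      rw [hgeq]
      exact hA
    have hg₀E : s(F.z (jj-1), F.u) ∈ G.edgeSet := by
      rw [Sym2.eq_swap]
      exact F.fedge_mem_edgeSet (by omega)
    have hg₀S : s(F.z (jj-1), F.u) ∉ F.Scol (jj-1) := by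
      rw [Sym2.eq_swap]
      exact F.fedge_not_mem_Scol (jj-1)
    have hx₁ : ∀ g ∈ F.Scol (jj-1), F.z (jj-1) ∈ g → F.ccol (jj-1) g ≠ τ :=
      F.ccol_at_z (by omega) hτjm.2
    have hx₂ : ∀ g ∈ F.Scol (jj-1), F.u ∈ g → F.ccol (jj-1) g ≠ σ :=
      F.ccol_at_u (by omega) hσ.2
    obtain ⟨T, hT1, hT2, hT3⟩ := swap_and_add G (F.Scol (jj-1)) (F.ccol (jj-1))
      (F.Scol_sub (by omega)) (F.shift_proper (by omega)) σ τ hσ.1 hτk.1 hστ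
      (F.z (jj-1)) F.u hg₀E hg₀S htrans hx₁ hx₂
    exact F.win_card hmax hT1 hT2 (by rw [hT3, F.Scol_ncard (by omega : jj - 1 ≤ F.k)])

end FanSetup
end Fan4

lemma crux [Fintype V] (G : SimpleGraph V) [DecidableRel G.Adj]
    (S : Set (Sym2 V)) (hSE : S ⊆ G.edgeSet) (c : Sym2 V → ℕ)
    (hc : EdgeProperOn S c G.maxDegree)
    (hmax : ∀ T, T ⊆ G.edgeSet → EdgeColorableOn T G.maxDegree →
      auxTheta G T ≤ auxTheta G S)
    (u v w : V) (heE : s(u, v) ∈ G.edgeSet) (heS : s(u, v) ∉ S)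
    (hfE : s(v, w) ∈ G.edgeSet) (hfS : s(v, w) ∉ S) (hef : s(u, v) ≠ s(v, w)) :
    False := by
  classical
  set P : ℕ → Prop := fun k => ∃ z : ℕ → V, z 0 = v ∧
    (∀ i ≤ k, ∀ j ≤ k, z i = z j → i = j) ∧
    (∀ i, 1 ≤ i → i ≤ k → s(u, z i) ∈ S) ∧
    (∀ i, 1 ≤ i → i ≤ k → ∀ g ∈ S, z (i-1) ∈ g → c g ≠ c s(u, z i)) with hP
  have hbound : ∀ k, P k → k < Fintype.card V := by
    rintro k ⟨z, hz0, hinj, -, -⟩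
    have hinj' : Function.Injective (fun i : Fin (k+1) => z i.1) := by
      intro i j hij
      have := hinj i.1 (by omega) j.1 (by omega) hij
      exact Fin.ext this
    have := Fintype.card_le_of_injective _ hinj'
    simpa using this
  have hP0 : P 0 := by
    refine ⟨fun _ => v, rfl, ?_, ?_, ?_⟩
    · intro i hi j hj _; omega
    · intro i hi hik; omega
    · intro i hi hik; omega
  set kk := Nat.findGreatest P (Fintype.card V) with hkk
  have hPkk : P kk := Nat.findGreatest_spec (Nat.zero_le _) hP0
  obtain ⟨z, hz0, hinj, hmem, hfan⟩ := hPkk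
  let F : FanSetup G :=
    ⟨S, c, u, v, w, kk, z, hSE, hc, heE, heS, hfE, hfS, hef, hz0, hinj, hmem, hfan⟩
  have hmaxF : ∀ T, T ⊆ G.edgeSet → EdgeColorableOn T G.maxDegree →
      auxTheta G T ≤ auxTheta G F.S := hmax
  obtain ⟨τ, hτmiss⟩ := F.miss_nonempty_z hmaxF (le_rfl)
  have hτedge : ∃ g ∈ S, u ∈ g ∧ c g = τ := by
    by_contra hcon
    push_neg at hcon
    refine F.no_common hmaxF le_rfl (a := τ) ⟨hτmiss.1, ?_⟩ hτmiss
    intro g hg hug hEq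
    exact (hcon g hg hug) hEq
  obtain ⟨g, hgS, hug, hgτ⟩ := hτedge
  obtain ⟨y, hy⟩ := Sym2.mem_iff_exists.mp hug
  have hyu : y ≠ u := by
    have hmemE : s(u, y) ∈ G.edgeSet := hy ▸ hSE hgS
    exact (G.mem_edgeSet.mp hmemE).ne'
  by_cases hnew : ∀ i ≤ kk, y ≠ z i
  · -- extend the fan: contradiction with maximality of kk
    have hPk1 : P (kk + 1) := by
      refine ⟨fun i => if i = kk + 1 then y else z i, ?_, ?_, ?_, ?_⟩
      · beta_reduce
        rw [if_neg (by omega)]; exact hz0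
      · intro i hi j hj hij
        beta_reduce at hij
        by_cases hik : i = kk + 1 <;> by_cases hjk : j = kk + 1
        · omega
        · rw [if_pos hik, if_neg hjk] at hij
          exact absurd hij (hnew j (by omega))
        · rw [if_neg hik, if_pos hjk] at hij
          exact absurd hij.symm (hnew i (by omega))
        · rw [if_neg hik, if_neg hjk] at hij
          exact hinj i (by omega) j (by omega) hij
      · intro i h1 hik
        beta_reduce
        by_cases hik' : i = kk + 1
        · rw [if_pos hik']
          exact hy ▸ hgS
        · rw [if_neg hik']
          exact hmem i h1 (by omega)
      · intro i h1 hik g' hg' hzg' hEq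
        beta_reduce at hzg' hEq
        by_cases hik' : i = kk + 1
        · subst hik'
          rw [if_pos rfl] at hEq
          rw [if_neg (by omega)] at hzg'
          have : c g' = τ := by rw [hEq, ← hy, hgτ]
          have hki : kk + 1 - 1 = kk := by omega
          rw [hki] at hzg'
          exact hτmiss.2 g' hg' hzg' this
        · rw [if_neg hik'] at hEq
          rw [if_neg (by omega)] at hzg'
          exact hfan i h1 (by omega) g' hg' hzg' hEq
    have h1 := Nat.le_findGreatest (le_of_lt (hbound _ hPk1)) hPk1
    omega
  · push_neg at hnew
    obtain ⟨jj, hjjk, hyz⟩ := hnew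
    subst hyz
    have hjj1 : 1 ≤ jj := by
      rcases Nat.eq_zero_or_pos jj with rfl | h
      · exfalso
        rw [hz0] at hy
        exact heS (hy ▸ hgS)
      · exact h
    have hτalpha : τ = F.alpha jj := by
      show τ = c s(u, z jj)
      rw [← hy, hgτ]
    have hjjltk : jj < kk := by
      rcases Nat.lt_or_ge jj kk with h | h
      · exact h
      · exfalso
        have : jj = kk := by omega
        subst this
        refine hτmiss.2 g hgS ?_ hgτ
        show z kk ∈ g
        rw [hy, Sym2.mem_iff]
        right; rfl
    obtain ⟨σ, hσmiss⟩ := F.miss_nonempty_u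
    exact F.endgame hmaxF hσmiss hτmiss hjj1 hjjltk hτalpha

theorem exists_maxColorable_complement_matching'
    [Fintype V] (G : SimpleGraph V) [DecidableRel G.Adj] :
    ∃ S : Set (Sym2 V), G.IsMaxColorableSub S ∧
      ∀ e ∈ G.edgeSet \ S, ∀ f ∈ G.edgeSet \ S, e ≠ f →
        ¬ ∃ v : V, v ∈ e ∧ v ∈ f := by
  classical
  set 𝒮 : Set (Set (Sym2 V)) := {T | T ⊆ G.edgeSet ∧ EdgeColorableOn T G.maxDegree} with h𝒮
  have hne : 𝒮.Nonempty := by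
    refine ⟨∅, Set.empty_subset _, ⟨fun _ => 0, ?_, ?_⟩⟩
    · intro e he; exact absurd he (Set.notMem_empty e)
    · intro e he; exact absurd he (Set.notMem_empty e)
  obtain ⟨S, hS𝒮, hSmax'⟩ :=
    Set.Finite.exists_maximalFor (auxTheta G) 𝒮 (Set.toFinite _) hne
  have hmax : ∀ T, T ⊆ G.edgeSet → EdgeColorableOn T G.maxDegree →
      auxTheta G T ≤ auxTheta G S := by
    intro T hT1 hT2
    by_contra hlt
    push_neg at hlt
    have := hSmax' (j := T) ⟨hT1, hT2⟩ (le_of_lt hlt)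
    omega
  refine ⟨S, ⟨hS𝒮.1, hS𝒮.2, ?_⟩, ?_⟩
  · intro T hT1 hT2
    by_contra hlt
    push_neg at hlt
    have := auxTheta_lt_of_card G S T hlt
    have := hmax T hT1 hT2
    omega
  · rintro e ⟨heE, heS⟩ f ⟨hfE, hfS⟩ hef ⟨x, hxe, hxf⟩
    obtain ⟨b, hb⟩ := Sym2.mem_iff_exists.mp hxe
    obtain ⟨d, hd⟩ := Sym2.mem_iff_exists.mp hxf
    obtain ⟨cS, hcS⟩ := hS𝒮.2
    subst hb; subst hd
    refine crux G S hS𝒮.1 cS hcS hmax b x d ?_ ?_ hfE hfS ?_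
    · rw [Sym2.eq_swap]; exact heE
    · rw [Sym2.eq_swap]; exact heS
    · rw [Sym2.eq_swap]; exact hef

end Aux

/-- Theorem 10 of the paper. Every finite simple graph `G`
contains a maximum `Δ(G)`-edge-colorable subgraph (edge set `S`) such that the
uncolored edges `E(G) \ S` form a matching: no two of them share a vertex. -/
theorem exists_maxColorable_complement_matching
    [Fintype V] (G : SimpleGraph V) [DecidableRel G.Adj] :
    ∃ S : Set (Sym2 V), G.IsMaxColorableSub S ∧
      ∀ e ∈ G.edgeSet \ S, ∀ f ∈ G.edgeSet \ S, e ≠ f →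
        ¬ ∃ v : V, v ∈ e ∧ v ∈ f :=
  exists_maxColorable_complement_matching' G
end
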